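/- arXiv:1602.04976 — 7 statements merged into one kernel-verified Lean document; each statement's English description precedes it below -/
import Mathlib

section
/- Fix any u > 0, a > 1 and an increasing sequence of integers (n_h)_{h∈ℕ}, and set u_i = u + n_i + log(i^a ζ(a)) for i ≥ 1, where ζ is the Riemann zeta function. Then for any tree T = (T_h)_{h≥0} on X whose nodes exhaust X and which satisfies |T_h| ≤ e^{n_h} for every h ≥ 0, the event "for all h ≥ 0 and all s ∈ T_h, sup_{x ≻ s} (f(x) − f(s)) ≤ ω_h" holds with probability at least 1 − e^{−u}, where ω_h = sup_{x∈X} Σ_{i>h} ℓ_{u_i}(p_i(x), p_{i−1}(x)). -/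
open MeasureTheory Real
open scoped ENNReal NNReal

noncomputable section

/-- The Riemann zeta function of a real argument `a > 1`, as the series `∑_{i≥1} i^{-a}`. -/
def zetaR (a : ℝ) : ℝ := ∑' i : ℕ, 1 / ((i : ℝ) + 1) ^ a

/-- A (chaining) tree on `X`: a sequence of levels `level h ⊆ X` together with the
ancestor maps `anc h : X → X` sending a point to its ancestor `p_h(x)` at depth `h`.
The nodes exhaust `X` at depth `h0` (so `p_h(x) = x` for `h ≥ h0`), and the ancestor
at depth `h` of the ancestor at depth `h' ≥ h` is the ancestor at depth `h`
(the parent of a node `x` at depth `h+1` is `anc h x ∈ level h`). -/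
structure ChainTree (X : Type*) where
  level : ℕ → Finset X
  h0 : ℕ
  anc : ℕ → X → X
  anc_mem : ∀ h x, anc h x ∈ level h
  anc_deep : ∀ h x, h0 ≤ h → anc h x = x
  anc_anc : ∀ h h' x, h ≤ h' → anc h (anc h' x) = anc h x

/-- The confidence bound `ℓ_u(x,y) = inf{s : P[f(x) - f(y) > s] < e^{-u}}` on the
increments of the process `f`. -/
def ell {Ω X : Type*} [MeasurableSpace Ω] (P : Measure Ω) (f : Ω → X → ℝ)
    (u : ℝ) (x y : X) : ℝ :=
  sInf {s : ℝ | P {ω | s < f ω x - f ω y} < ENNReal.ofReal (Real.exp (-u))}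

/-- The chaining weights `u_i = u + n_i + log(i^a ζ(a))`. -/
def chainWeight (u a : ℝ) (n : ℕ → ℤ) (i : ℕ) : ℝ :=
  u + (n i : ℝ) + Real.log ((i : ℝ) ^ a * zetaR a)

/-- `ω_h = sup_{x ∈ X} ∑_{i > h} ℓ_{u_i}(p_i(x), p_{i-1}(x))` (the sum over `i > h` reduces
to the sum over `h < i ≤ h0` since `p_i(x) = p_{i-1}(x) = x` for `i > h0`). -/
def omegah {Ω X : Type*} [MeasurableSpace Ω] [Fintype X] [Nonempty X]
    (P : Measure Ω) (f : Ω → X → ℝ) (T : ChainTree X) (u a : ℝ) (n : ℕ → ℤ) (h : ℕ) : ℝ :=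
  ⨆ x : X, ∑ i ∈ Finset.Ioc h T.h0,
    ell P f (chainWeight u a n i) (T.anc i x) (T.anc (i - 1) x)

/-- Key tail bound: the probability that `g` exceeds the threshold
`sInf {s : P[g > s] < ε}` is at most `ε`. -/
lemma meas_lt_sInf_le {Ω : Type*} [MeasurableSpace Ω] (P : Measure Ω) [IsFiniteMeasure P]
    (g : Ω → ℝ) (hg : Measurable g) (ε : ℝ≥0∞) (hε : 0 < ε) :
    P {ω | sInf {s : ℝ | P {ω' | s < g ω'} < ε} < g ω} ≤ ε := by
  set S : Set ℝ := {s : ℝ | P {ω' | s < g ω'} < ε} with hS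
  have hSne : S.Nonempty := by
    have hmono : Antitone fun k : ℕ => {ω' | (k : ℝ) < g ω'} := by
      intro k m hkm ω hω
      have hle : (k : ℝ) ≤ (m : ℝ) := by exact_mod_cast hkm
      exact hle.trans_lt hω
    have hempty : (⋂ k : ℕ, {ω' | (k : ℝ) < g ω'}) = ∅ := by
      ext ω
      simp only [Set.mem_iInter, Set.mem_setOf_eq, Set.mem_empty_iff_false, iff_false,
        not_forall, not_lt]
      obtain ⟨k, hk⟩ := exists_nat_gt (g ω)
      exact ⟨k, hk.le⟩
    have htend := tendsto_measure_iInter_atTop (μ := P)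
      (fun k => (measurableSet_lt measurable_const hg).nullMeasurableSet) hmono
      ⟨0, measure_ne_top _ _⟩
    rw [hempty, measure_empty] at htend
    obtain ⟨k, hk⟩ := (htend.eventually_lt_const hε).exists
    exact ⟨k, hk⟩
  have hsub : {ω | sInf S < g ω} ⊆ ⋃ q : {q : ℚ // (q : ℝ) ∈ S}, {ω' | (q.1 : ℝ) < g ω'} := by
    intro ω hω
    have hω' : sInf S < g ω := hω
    have hex : ∃ r ∈ S, r < g ω := by
      by_cases hb : BddBelow S
      · exact (csInf_lt_iff hb hSne).1 hω'
      · obtain ⟨r, hrS, hr⟩ := not_bddBelow_iff.1 hb (g ω)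
        exact ⟨r, hrS, hr⟩
    obtain ⟨r, hrS, hr⟩ := hex
    obtain ⟨q, hq1, hq2⟩ := exists_rat_btwn hr
    have hqS : (q : ℝ) ∈ S :=
      lt_of_le_of_lt (measure_mono fun ω' hω'' => lt_trans hq1 hω'') hrS
    exact Set.mem_iUnion.2 ⟨⟨q, hqS⟩, hq2⟩
  refine le_trans (measure_mono hsub) ?_
  rcases isEmpty_or_nonempty {q : ℚ // (q : ℝ) ∈ S} with hQ | hQ
  · simp
  · have hdir : Directed (· ⊆ ·)
        (fun q : {q : ℚ // (q : ℝ) ∈ S} => {ω' | (q.1 : ℝ) < g ω'}) := by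
      intro q1 q2
      rcases le_total q1.1 q2.1 with hle | hle
      · have hle' : (q1.1 : ℝ) ≤ (q2.1 : ℝ) := by exact_mod_cast hle
        exact ⟨q1, le_refl _, fun ω hω => hle'.trans_lt hω⟩
      · have hle' : (q2.1 : ℝ) ≤ (q1.1 : ℝ) := by exact_mod_cast hle
        exact ⟨q2, fun ω hω => hle'.trans_lt hω, le_refl _⟩
    rw [hdir.measure_iUnion]
    exact iSup_le fun q => (q.2 : P _ < ε).le

lemma sum_Ioc_telescope {F : ℕ → ℝ} {h h0 : ℕ} (hh : h ≤ h0) :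
    ∑ i ∈ Finset.Ioc h h0, (F i - F (i - 1)) = F h0 - F h := by
  induction h0, hh using Nat.le_induction with
  | base => simp
  | succ m hm ih =>
    rw [Finset.sum_Ioc_succ_top hm, ih]
    simp

lemma zetaR_summable {a : ℝ} (ha : 1 < a) :
    Summable (fun i : ℕ => 1 / ((i : ℝ) + 1) ^ a) := by
  have h1 : Summable (fun n : ℕ => 1 / (n : ℝ) ^ a) :=
    Real.summable_one_div_nat_rpow.mpr ha
  have h2 := (summable_nat_add_iff 1).mpr h1
  refine h2.congr fun i => ?_
  push_cast
  ring_nf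

lemma zetaR_pos {a : ℝ} (ha : 1 < a) : 0 < zetaR a := by
  refine Summable.tsum_pos (zetaR_summable ha) (fun i => by positivity) 0 ?_
  norm_num

lemma sum_inv_rpow_le {a : ℝ} (ha : 1 < a) (h0 : ℕ) :
    ∑ i ∈ Finset.Icc 1 h0, ((i : ℝ) ^ a)⁻¹ ≤ zetaR a := by
  have hrw : ∑ i ∈ Finset.Icc 1 h0, ((i : ℝ) ^ a)⁻¹
      = ∑ i ∈ Finset.range h0, 1 / ((i : ℝ) + 1) ^ a := by
    rw [← Finset.Ico_add_one_right_eq_Icc, Finset.sum_Ico_eq_sum_range]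
    refine Finset.sum_congr (by simp) fun i _ => ?_
    push_cast
    rw [one_div, add_comm]
  rw [hrw]
  exact Summable.sum_le_tsum (Finset.range h0) (fun i _ => by positivity) (zetaR_summable ha)

/-- **Generic Chaining Upper Bound.** For any `u > 0`, `a > 1`, any increasing sequence of
integers `(n_h)`, with `u_i = u + n_i + log(i^a ζ(a))`, and any tree `T` whose nodes exhaust
`X` and with `|T_h| ≤ e^{n_h}`, with probability at least `1 - e^{-u}`, for every depth `h`
and every node `s ∈ T_h`, `sup_{x ≻ s} f(x) - f(s) ≤ ω_h`. -/
theorem statement0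
    {Ω X : Type*} [MeasurableSpace Ω] [Fintype X] [Nonempty X]
    (P : Measure Ω) [IsProbabilityMeasure P]
    (f : Ω → X → ℝ) (hf : Measurable f)
    (u a : ℝ) (hu : 0 < u) (ha : 1 < a)
    (n : ℕ → ℤ) (hn : Monotone n)
    (T : ChainTree X)
    (hcard : ∀ h : ℕ, ((T.level h).card : ℝ) ≤ Real.exp (n h)) :
    P {ω | ∀ h : ℕ, ∀ s ∈ T.level h, ∀ x : X, T.anc h x = s →
        f ω x - f ω s ≤ omegah P f T u a n h}
      ≥ ENNReal.ofReal (1 - Real.exp (-u)) := by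
  classical
  set h0 := T.h0 with hh0
  set v : ℕ → ℝ := chainWeight u a n with hv
  set B : ℕ → X → Set Ω := fun i t =>
    {ω | ell P f (v i) t (T.anc (i - 1) t) < f ω t - f ω (T.anc (i - 1) t)} with hB
  set Bad : Set Ω := ⋃ i ∈ Finset.Icc 1 h0, ⋃ t ∈ T.level i, B i t with hBad
  have hζ := zetaR_pos ha
  have hmeas : ∀ t : X, Measurable fun ω => f ω t :=
    fun t => (measurable_pi_apply t).comp hf
  -- each bad event has small probability
  have hBle : ∀ i, ∀ t : X, P (B i t) ≤ ENNReal.ofReal (Real.exp (-(v i))) := by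
    intro i t
    have := meas_lt_sInf_le P (fun ω => f ω t - f ω (T.anc (i - 1) t))
      ((hmeas t).sub (hmeas _)) (ENNReal.ofReal (Real.exp (-(v i))))
      (ENNReal.ofReal_pos.mpr (Real.exp_pos _))
    simpa [hB, ell] using this
  -- union bound on the bad event
  have hBad_le : P Bad ≤ ENNReal.ofReal (Real.exp (-u)) := by
    have step1 : P Bad ≤ ∑ i ∈ Finset.Icc 1 h0, ∑ t ∈ T.level i, P (B i t) :=
      le_trans (measure_biUnion_finset_le _ _)
        (Finset.sum_le_sum fun i _ => measure_biUnion_finset_le _ _)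
    have step2 : ∀ i ∈ Finset.Icc 1 h0, ∑ t ∈ T.level i, P (B i t)
        ≤ ENNReal.ofReal (((T.level i).card : ℝ) * Real.exp (-(v i))) := by
      intro i _
      calc ∑ t ∈ T.level i, P (B i t)
          ≤ ∑ _t ∈ T.level i, ENNReal.ofReal (Real.exp (-(v i))) :=
            Finset.sum_le_sum fun t _ => hBle i t
        _ = ((T.level i).card : ℝ≥0∞) * ENNReal.ofReal (Real.exp (-(v i))) := by
            rw [Finset.sum_const, nsmul_eq_mul]
        _ = ENNReal.ofReal (((T.level i).card : ℝ) * Real.exp (-(v i))) := by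
            rw [ENNReal.ofReal_mul (by positivity), ENNReal.ofReal_natCast]
    have hterm : ∀ i ∈ Finset.Icc 1 h0,
        ((T.level i).card : ℝ) * Real.exp (-(v i))
          ≤ Real.exp (-u) * (zetaR a)⁻¹ * ((i : ℝ) ^ a)⁻¹ := by
      intro i hi
      have hi1 : 1 ≤ i := (Finset.mem_Icc.1 hi).1
      have hipos : (0 : ℝ) < (i : ℝ) := by exact_mod_cast Nat.lt_of_lt_of_le Nat.zero_lt_one hi1
      have hz : (0 : ℝ) < (i : ℝ) ^ a * zetaR a :=
        mul_pos (Real.rpow_pos_of_pos hipos a) hζ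
      have hvexp : Real.exp (-(v i))
          = Real.exp (-u) * (Real.exp ((n i : ℝ)))⁻¹ * ((i : ℝ) ^ a * zetaR a)⁻¹ := by
        have : -(v i) = (-u) + (-((n i : ℝ))) + (-(Real.log ((i : ℝ) ^ a * zetaR a))) := by
          simp only [hv, chainWeight]; ring
        rw [this, Real.exp_add, Real.exp_add, Real.exp_neg ((n i : ℝ)),
          Real.exp_neg (Real.log _), Real.exp_log hz]
      calc ((T.level i).card : ℝ) * Real.exp (-(v i))
          ≤ Real.exp ((n i : ℝ)) * Real.exp (-(v i)) :=
            mul_le_mul_of_nonneg_right (hcard i) (Real.exp_pos _).le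
        _ = Real.exp (-u) * (zetaR a)⁻¹ * ((i : ℝ) ^ a)⁻¹ := by
            rw [hvexp, mul_inv]
            field_simp
    calc P Bad ≤ ∑ i ∈ Finset.Icc 1 h0, ∑ t ∈ T.level i, P (B i t) := step1
      _ ≤ ∑ i ∈ Finset.Icc 1 h0,
            ENNReal.ofReal (((T.level i).card : ℝ) * Real.exp (-(v i))) :=
          Finset.sum_le_sum step2
      _ = ENNReal.ofReal (∑ i ∈ Finset.Icc 1 h0,
            ((T.level i).card : ℝ) * Real.exp (-(v i))) :=
          (ENNReal.ofReal_sum_of_nonneg fun i _ => by positivity).symm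
      _ ≤ ENNReal.ofReal (Real.exp (-u)) := by
          refine ENNReal.ofReal_le_ofReal ?_
          calc ∑ i ∈ Finset.Icc 1 h0, ((T.level i).card : ℝ) * Real.exp (-(v i))
              ≤ ∑ i ∈ Finset.Icc 1 h0, Real.exp (-u) * (zetaR a)⁻¹ * ((i : ℝ) ^ a)⁻¹ :=
                Finset.sum_le_sum hterm
            _ = Real.exp (-u) * (zetaR a)⁻¹ * ∑ i ∈ Finset.Icc 1 h0, ((i : ℝ) ^ a)⁻¹ := by
                rw [Finset.mul_sum]
            _ ≤ Real.exp (-u) * (zetaR a)⁻¹ * zetaR a := by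
                refine mul_le_mul_of_nonneg_left (sum_inv_rpow_le ha h0) (by positivity)
            _ = Real.exp (-u) := by
                field_simp
  -- the good event is contained in the target event
  have hGood : Badᶜ ⊆ {ω | ∀ h : ℕ, ∀ s ∈ T.level h, ∀ x : X, T.anc h x = s →
      f ω x - f ω s ≤ omegah P f T u a n h} := by
    intro ω hω h s hs x hanc
    have hωs : ∀ i ∈ Finset.Icc 1 h0, ∀ t ∈ T.level i,
        f ω t - f ω (T.anc (i - 1) t) ≤ ell P f (v i) t (T.anc (i - 1) t) := by
      intro i hi t ht
      by_contra hlt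
      exact hω (Set.mem_biUnion hi (Set.mem_biUnion ht (not_le.1 hlt)))
    have key2 : f ω x - f ω s
        ≤ ∑ i ∈ Finset.Ioc h h0, ell P f (v i) (T.anc i x) (T.anc (i - 1) x) := by
      by_cases hle : h ≤ h0
      · have tele : ∑ i ∈ Finset.Ioc h h0,
            (f ω (T.anc i x) - f ω (T.anc (i - 1) x))
            = f ω (T.anc h0 x) - f ω (T.anc h x) :=
          sum_Ioc_telescope (F := fun i => f ω (T.anc i x)) hle
        have hx0 : T.anc h0 x = x := T.anc_deep h0 x le_rfl
        rw [hx0] at tele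
        rw [← hanc, ← tele]
        refine Finset.sum_le_sum fun i hi => ?_
        have hi' := Finset.mem_Ioc.1 hi
        have hi1 : 1 ≤ i := by omega
        have := hωs i (Finset.mem_Icc.2 ⟨hi1, hi'.2⟩) (T.anc i x) (T.anc_mem i x)
        rwa [T.anc_anc (i - 1) i x (Nat.sub_le i 1)] at this
      · push_neg at hle
        have hx : T.anc h x = x := T.anc_deep h x hle.le
        rw [← hanc, hx, Finset.Ioc_eq_empty (by omega)]
        simp
    refine key2.trans ?_
    rw [omegah, ← hv, ← hh0]
    exact le_ciSup (Set.finite_range (fun x : X => ∑ i ∈ Finset.Ioc h h0,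
      ell P f (v i) (T.anc i x) (T.anc (i - 1) x))).bddAbove x
  -- conclude
  have h1 : (1 : ℝ≥0∞) ≤ P Badᶜ + P Bad := by
    have : (1 : ℝ≥0∞) = P (Set.univ) := (measure_univ).symm
    rw [this]
    refine le_trans (measure_mono ?_) (measure_union_le _ _)
    rw [Set.compl_union_self]
  calc ENNReal.ofReal (1 - Real.exp (-u))
      = 1 - ENNReal.ofReal (Real.exp (-u)) := by
        rw [ENNReal.ofReal_sub _ (Real.exp_pos _).le, ENNReal.ofReal_one]
    _ ≤ 1 - P Bad := tsub_le_tsub_left hBad_le 1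
    _ ≤ P Badᶜ := tsub_le_iff_right.2 h1
    _ ≤ _ := measure_mono hGood

end
end

section
/- Fix any u > 0, a > 1 and an increasing sequence of integers (n_h)_{h∈ℕ}, and set u_i = u + n_i + log(i^a ζ(a)) for i ≥ 1, where ζ is the Riemann zeta function. Let T = (T_h)_{h≥0} be a tree on X with |T_h| ≤ e^{n_h} for every h, such that X = T_{≤h₀} for some h₀. Then with probability at least 1 − e^{−u}, for every h ≥ 0 and every x ∈ X, f(x) − f(p_h(x)) ≤ ω_h, where ω_h = sup_{x∈X} Σ_{i>h} ℓ_{u_i}(p_i(x), p_{i−1}(x)). -/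
open MeasureTheory Real

noncomputable section

/-- Telescoping sum over `Ioc`. -/
lemma tele_sum (g : ℕ → ℝ) {h m : ℕ} (hm : h ≤ m) :
    ∑ i ∈ Finset.Ioc h m, (g i - g (i - 1)) = g m - g h := by
  induction m, hm using Nat.le_induction with
  | base => simp
  | succ m hm ih =>
      rw [Finset.sum_Ioc_succ_top hm (fun i => g i - g (i - 1)), ih]
      simp only [Nat.add_sub_cancel]
      ring

/-- Key probability bound for the confidence level. -/
lemma ell_prob_aux {Ω : Type*} [MeasurableSpace Ω] (P : Measure Ω) [IsProbabilityMeasure P]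
    {D : Ω → ℝ} (hD : Measurable D) (u : ℝ) :
    P {ω | sInf {s : ℝ | P {ω | s < D ω} < ENNReal.ofReal (Real.exp (-u))} < D ω}
      ≤ ENNReal.ofReal (Real.exp (-u)) := by
  set c := ENNReal.ofReal (Real.exp (-u)) with hc
  set S := {s : ℝ | P {ω | s < D ω} < c} with hSdef
  have hc0 : 0 < c := ENNReal.ofReal_pos.mpr (Real.exp_pos _)
  have hmeasS : ∀ s : ℝ, MeasurableSet {ω | s < D ω} :=
    fun s => measurableSet_lt measurable_const hD
  have hne : S.Nonempty := by
    have hanti : Antitone (fun nn : ℕ => {ω | (nn : ℝ) < D ω}) := by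
      intro nn mm hnm ω hω
      simp only [Set.mem_setOf_eq] at hω ⊢
      exact lt_of_le_of_lt (by exact_mod_cast hnm) hω
    have hempty : ⋂ nn : ℕ, {ω | (nn : ℝ) < D ω} = (∅ : Set Ω) := by
      ext ω
      simp only [Set.mem_iInter, Set.mem_setOf_eq, Set.mem_empty_iff_false, iff_false,
        not_forall, not_lt]
      obtain ⟨nn, hn⟩ := exists_nat_gt (D ω)
      exact ⟨nn, hn.le⟩
    have htend := tendsto_measure_iInter_atTop
      (μ := P) (s := fun nn : ℕ => {ω | (nn : ℝ) < D ω})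
      (fun nn => (hmeasS (nn : ℝ)).nullMeasurableSet) hanti ⟨0, measure_ne_top P _⟩
    rw [hempty, measure_empty] at htend
    obtain ⟨nn, hn⟩ := (htend.eventually_lt_const hc0).exists
    exact ⟨nn, hn⟩
  have key : ∀ ε : ℝ, 0 < ε → P {ω | sInf S + ε < D ω} ≤ c := by
    intro ε hε
    obtain ⟨s, hsS, hs⟩ := exists_lt_of_csInf_lt hne (lt_add_of_pos_right _ hε)
    refine le_of_lt (lt_of_le_of_lt (measure_mono ?_) hsS)
    intro ω hω
    exact lt_trans hs hω
  have hU : {ω | sInf S < D ω} = ⋃ nn : ℕ, {ω | sInf S + 1 / ((nn : ℝ) + 1) < D ω} := by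
    ext ω
    simp only [Set.mem_setOf_eq, Set.mem_iUnion]
    constructor
    · intro hω
      obtain ⟨nn, hn⟩ := exists_nat_one_div_lt (sub_pos.mpr hω)
      exact ⟨nn, by linarith⟩
    · rintro ⟨nn, hn⟩
      have : (0 : ℝ) < 1 / ((nn : ℝ) + 1) := by positivity
      linarith
  rw [hU]
  have hdir : Directed (· ⊆ ·) (fun nn : ℕ => {ω | sInf S + 1 / ((nn : ℝ) + 1) < D ω}) := by
    apply Monotone.directed_le
    intro nn mm hnm ω hω
    simp only [Set.mem_setOf_eq] at *
    have h1 : 1 / ((mm : ℝ) + 1) ≤ 1 / ((nn : ℝ) + 1) := by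
      apply one_div_le_one_div_of_le (by positivity)
      exact_mod_cast add_le_add_left (Nat.cast_le.mpr hnm) 1
    linarith
  rw [Directed.measure_iUnion hdir]
  exact iSup_le fun nn => key _ (by positivity)



/-- **Discretization error of `T_h`.** With the assumptions of the generic chaining upper
bound (tree with `|T_h| ≤ e^{n_h}` exhausting `X` at depth `h0`), with probability at least
`1 - e^{-u}`, for every `h ≥ 0` and every `x ∈ X`, `f(x) - f(p_h(x)) ≤ ω_h`. -/
theorem statement1
    {Ω X : Type*} [MeasurableSpace Ω] [Fintype X] [Nonempty X]
    (P : Measure Ω) [IsProbabilityMeasure P]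
    (f : Ω → X → ℝ) (hf : Measurable f)
    (u a : ℝ) (hu : 0 < u) (ha : 1 < a)
    (n : ℕ → ℤ) (hn : Monotone n)
    (T : ChainTree X)
    (hcard : ∀ h : ℕ, ((T.level h).card : ℝ) ≤ Real.exp (n h)) :
    P {ω | ∀ h : ℕ, ∀ x : X, f ω x - f ω (T.anc h x) ≤ omegah P f T u a n h}
      ≥ ENNReal.ofReal (1 - Real.exp (-u)) := by
  classical
  -- evaluation maps are measurable
  have hmeas : ∀ z : X, Measurable fun ω => f ω z :=
    fun z => (measurable_pi_apply z).comp hf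
  -- the single-increment probability bound
  have hell : ∀ (v : ℝ) (x y : X),
      P {ω | ell P f v x y < f ω x - f ω y} ≤ ENNReal.ofReal (Real.exp (-v)) := by
    intro v x y
    exact ell_prob_aux P ((hmeas x).sub (hmeas y)) v
  -- the bad event
  set A : ℕ → X → Set Ω := fun i y =>
    {ω | ell P f (chainWeight u a n i) y (T.anc (i - 1) y) < f ω y - f ω (T.anc (i - 1) y)}
    with hA
  set B : Set Ω := ⋃ i ∈ Finset.Ioc 0 T.h0, ⋃ y ∈ T.level i, A i y with hB
  have hAmeas : ∀ i y, MeasurableSet (A i y) :=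
    fun i y => measurableSet_lt measurable_const ((hmeas y).sub (hmeas _))
  have hBmeas : MeasurableSet B := by
    refine Finset.measurableSet_biUnion _ fun i _ => ?_
    exact Finset.measurableSet_biUnion _ fun y _ => hAmeas i y
  -- summability of the zeta series and positivity
  have hsum : Summable (fun i : ℕ => 1 / ((i : ℝ) + 1) ^ a) := by
    have h1 := (summable_nat_add_iff
      (f := fun i : ℕ => 1 / (i : ℝ) ^ a) 1).mpr (Real.summable_one_div_nat_rpow.mpr ha)
    simpa using h1
  have hz : 0 < zetaR a := by
    unfold zetaR
    refine Summable.tsum_pos hsum (fun i => by positivity) 0 (by positivity)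
  -- the real-valued sum bound
  have hreal : ∑ i ∈ Finset.Ioc 0 T.h0,
      ((T.level i).card : ℝ) * Real.exp (-(chainWeight u a n i)) ≤ Real.exp (-u) := by
    have hterm : ∀ i ∈ Finset.Ioc 0 T.h0,
        ((T.level i).card : ℝ) * Real.exp (-(chainWeight u a n i))
          ≤ Real.exp (-u) * (zetaR a)⁻¹ * (1 / (i : ℝ) ^ a) := by
      intro i hi
      have hi1 : 1 ≤ i := (Finset.mem_Ioc.mp hi).1
      have hipos : (0 : ℝ) < (i : ℝ) := by exact_mod_cast hi1
      have hra : (0 : ℝ) < (i : ℝ) ^ a := Real.rpow_pos_of_pos hipos a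
      have ht : (0 : ℝ) < (i : ℝ) ^ a * zetaR a := mul_pos hra hz
      have hexp : Real.exp (-(chainWeight u a n i))
          = Real.exp (-u) * Real.exp (-((n i : ℝ))) * ((i : ℝ) ^ a * zetaR a)⁻¹ := by
        unfold chainWeight
        rw [show -(u + ((n i : ℤ) : ℝ) + Real.log ((i : ℝ) ^ a * zetaR a))
            = (-u) + (-((n i : ℝ))) + (-(Real.log ((i : ℝ) ^ a * zetaR a))) by push_cast; ring]
        rw [Real.exp_add, Real.exp_add, Real.exp_neg (Real.log _), Real.exp_log ht]
      rw [hexp]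
      calc ((T.level i).card : ℝ)
            * (Real.exp (-u) * Real.exp (-((n i : ℝ))) * ((i : ℝ) ^ a * zetaR a)⁻¹)
          ≤ Real.exp ((n i : ℝ))
            * (Real.exp (-u) * Real.exp (-((n i : ℝ))) * ((i : ℝ) ^ a * zetaR a)⁻¹) := by
            apply mul_le_mul_of_nonneg_right (hcard i) (by positivity)
        _ = Real.exp (-u) * (zetaR a)⁻¹ * (1 / (i : ℝ) ^ a) := by
            rw [Real.exp_neg ((n i : ℝ)), mul_inv]
            field_simp
    calc ∑ i ∈ Finset.Ioc 0 T.h0,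
          ((T.level i).card : ℝ) * Real.exp (-(chainWeight u a n i))
        ≤ ∑ i ∈ Finset.Ioc 0 T.h0, Real.exp (-u) * (zetaR a)⁻¹ * (1 / (i : ℝ) ^ a) :=
          Finset.sum_le_sum hterm
      _ = Real.exp (-u) * (zetaR a)⁻¹ * ∑ i ∈ Finset.Ioc 0 T.h0, 1 / (i : ℝ) ^ a := by
          rw [Finset.mul_sum]
      _ ≤ Real.exp (-u) * (zetaR a)⁻¹ * zetaR a := by
          apply mul_le_mul_of_nonneg_left ?_ (by positivity)
          have hIoc : Finset.Ioc 0 T.h0 = Finset.Ico 1 (T.h0 + 1) := by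
            ext i
            simp only [Finset.mem_Ioc, Finset.mem_Ico]
            omega
          rw [hIoc, Finset.sum_Ico_eq_sum_range]
          simp only [Nat.add_sub_cancel]
          unfold zetaR
          refine le_trans (le_of_eq ?_)
            (Summable.sum_le_tsum (Finset.range T.h0) (fun i _ => by positivity) hsum)
          apply Finset.sum_congr rfl
          intro k _
          push_cast
          rw [add_comm]
      _ = Real.exp (-u) := by
          rw [mul_assoc, inv_mul_cancel₀ hz.ne', mul_one]
  -- probability of the bad event
  have hPB : P B ≤ ENNReal.ofReal (Real.exp (-u)) := by
    have h1 : P B ≤ ∑ i ∈ Finset.Ioc 0 T.h0, ∑ y ∈ T.level i, P (A i y) :=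
      le_trans (measure_biUnion_finset_le _ _)
        (Finset.sum_le_sum fun i _ => measure_biUnion_finset_le _ _)
    have h2 : ∀ i ∈ Finset.Ioc 0 T.h0, ∑ y ∈ T.level i, P (A i y)
        ≤ ENNReal.ofReal (((T.level i).card : ℝ) * Real.exp (-(chainWeight u a n i))) := by
      intro i _
      calc ∑ y ∈ T.level i, P (A i y)
          ≤ (T.level i).card • ENNReal.ofReal (Real.exp (-(chainWeight u a n i))) :=
            Finset.sum_le_card_nsmul _ _ _ (fun y _ => hell _ _ _)
        _ = ENNReal.ofReal (((T.level i).card : ℝ)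
              * Real.exp (-(chainWeight u a n i))) := by
            rw [nsmul_eq_mul, ← ENNReal.ofReal_natCast,
              ← ENNReal.ofReal_mul (Nat.cast_nonneg _)]
    calc P B ≤ ∑ i ∈ Finset.Ioc 0 T.h0,
          ENNReal.ofReal (((T.level i).card : ℝ) * Real.exp (-(chainWeight u a n i))) :=
          h1.trans (Finset.sum_le_sum h2)
      _ = ENNReal.ofReal (∑ i ∈ Finset.Ioc 0 T.h0,
            ((T.level i).card : ℝ) * Real.exp (-(chainWeight u a n i))) :=
          (ENNReal.ofReal_sum_of_nonneg (fun i _ => by positivity)).symm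
      _ ≤ ENNReal.ofReal (Real.exp (-u)) := ENNReal.ofReal_le_ofReal hreal
  -- the complement of the bad event is contained in the target event
  have hsub : Bᶜ ⊆ {ω | ∀ h : ℕ, ∀ x : X, f ω x - f ω (T.anc h x) ≤ omegah P f T u a n h} := by
    intro ω hω h x
    have hnot : ∀ i ∈ Finset.Ioc 0 T.h0, ∀ y ∈ T.level i,
        f ω y - f ω (T.anc (i - 1) y) ≤ ell P f (chainWeight u a n i) y (T.anc (i - 1) y) := by
      intro i hi y hy
      have : ω ∉ B := hω
      rw [hB] at this
      simp only [Set.mem_iUnion, not_exists, exists_prop, not_and] at this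
      have h3 := this i hi y hy
      rw [hA] at h3
      simpa [not_lt] using h3
    by_cases hh : T.h0 ≤ h
    · rw [T.anc_deep h x hh, sub_self]
      unfold omegah
      rw [Finset.Ioc_eq_empty (not_lt.mpr hh)]
      simp
    · have hle : h ≤ T.h0 := le_of_lt (lt_of_not_ge hh)
      calc f ω x - f ω (T.anc h x)
          = ∑ i ∈ Finset.Ioc h T.h0, (f ω (T.anc i x) - f ω (T.anc (i - 1) x)) := by
            have htel := tele_sum (fun i => f ω (T.anc i x)) hle
            simp only [T.anc_deep T.h0 x le_rfl] at htel
            exact htel.symm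
        _ ≤ ∑ i ∈ Finset.Ioc h T.h0,
              ell P f (chainWeight u a n i) (T.anc i x) (T.anc (i - 1) x) := by
            refine Finset.sum_le_sum fun i hi => ?_
            have hmem := Finset.mem_Ioc.mp hi
            have hi0 : i ∈ Finset.Ioc 0 T.h0 := Finset.mem_Ioc.mpr ⟨by omega, hmem.2⟩
            have h4 := hnot i hi0 (T.anc i x) (T.anc_mem i x)
            rwa [T.anc_anc (i - 1) i x (Nat.sub_le i 1)] at h4
        _ ≤ omegah P f T u a n h := by
            unfold omegah
            exact le_ciSup (f := fun x : X => ∑ i ∈ Finset.Ioc h T.h0,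
              ell P f (chainWeight u a n i) (T.anc i x) (T.anc (i - 1) x))
              (Set.Finite.bddAbove (Set.finite_range _)) x
  calc ENNReal.ofReal (1 - Real.exp (-u))
      = 1 - ENNReal.ofReal (Real.exp (-u)) := by
        rw [ENNReal.ofReal_sub 1 (Real.exp_nonneg _), ENNReal.ofReal_one]
    _ ≤ 1 - P B := tsub_le_tsub_left hPB 1
    _ = P Bᶜ := (prob_compl_eq_one_sub hBmeas).symm
    _ ≤ P {ω | ∀ h : ℕ, ∀ x : X, f ω x - f ω (T.anc h x) ≤ omegah P f T u a n h} :=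
        measure_mono hsub

end
end

section
/- Fix u > 0 and a > 1. Let T = (T_h)_{h≥0} be a tree on X whose nodes exhaust X with |T_h| ≤ e^{n_h} for an increasing integer sequence (n_h), let h : {1,2,…} → ℕ be a depth schedule, and set v_i = u + n_{h(i)} + log(i^a ζ(a)) for each time step i ≥ 1, where ζ is the Riemann zeta function. Suppose that for every i ≥ 1 there are measurable random functions L_i, U_i : Ω × X × (0,∞) → ℝ such that for every x ∈ X and every v > 0, P[L_i(x,v) < f(x) < U_i(x,v)] ≥ 1 − e^{−v}, and that the queried points satisfy x_i ∈ argmax_{x ∈ T_{h(i)}} U_i(x, v_i) for all i ≥ 1. Then for every t ≥ 1, with probability at least 1 − 2e^{−u}, the cumulative regret satisfies R_t = t·sup_{x∈X} f(x) − Σ_{i=1}^t f(x_i) ≤ Σ_{i=1}^t ( ω_{h(i)} + U_i(x_i, v_i) − L_i(x_i, v_i) ), where ω_h = sup_{x∈X} Σ_{j>h} ℓ_{u_j}(p_j(x), p_{j−1}(x)) with u_j = u + n_j + log(j^a ζ(a)). -/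
open MeasureTheory Real

noncomputable section

open Filter Topology in
lemma tail_sInf_le' {Ω : Type*} [MeasurableSpace Ω] (P : Measure Ω) [IsProbabilityMeasure P]
    (g : Ω → ℝ) (hg : Measurable g) (ε : ℝ) (hε : 0 < ε) :
    P {ω | sInf {s : ℝ | P {ω | s < g ω} < ENNReal.ofReal ε} < g ω} ≤ ENNReal.ofReal ε := by
  set S : Set ℝ := {s : ℝ | P {ω | s < g ω} < ENNReal.ofReal ε} with hSdef
  have hεE : (0 : ENNReal) < ENNReal.ofReal ε := ENNReal.ofReal_pos.2 hε
  have hS : S.Nonempty := by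
    have hA : ∀ m : ℕ, MeasurableSet {ω | (m : ℝ) < g ω} :=
      fun m => measurableSet_lt measurable_const hg
    have hempty : (⋂ m : ℕ, {ω | (m : ℝ) < g ω}) = ∅ := by
      ext ω
      simp only [Set.mem_iInter, Set.mem_setOf_eq, Set.mem_empty_iff_false, iff_false, not_forall,
        not_lt]
      obtain ⟨m, hm⟩ := exists_nat_gt (g ω)
      exact ⟨m, hm.le⟩
    have htend : Tendsto (fun m : ℕ => P {ω | (m : ℝ) < g ω}) atTop (nhds 0) := by
      have := MeasureTheory.tendsto_measure_iInter_atTop (μ := P)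
        (s := fun m : ℕ => {ω | (m : ℝ) < g ω})
        (fun m => (hA m).nullMeasurableSet)
        (fun i j hij => Set.setOf_subset_setOf.2
          fun ω hω => lt_of_le_of_lt (Nat.cast_le.2 hij) hω)
        ⟨0, measure_ne_top _ _⟩
      rwa [hempty, measure_empty] at this
    obtain ⟨m, hm⟩ := (htend.eventually_lt_const hεE).exists
    exact ⟨(m : ℝ), hm⟩
  have key : ∀ m : ℕ, P {ω | sInf S + 1 / ((m : ℝ) + 1) < g ω} ≤ ENNReal.ofReal ε := by
    intro m
    obtain ⟨s, hsS, hslt⟩ := Real.lt_sInf_add_pos hS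
      (show (0:ℝ) < 1 / ((m : ℝ) + 1) by positivity)
    refine le_trans (measure_mono fun ω hω => ?_) hsS.le
    exact lt_trans hslt hω
  have hun : {ω | sInf S < g ω} = ⋃ m : ℕ, {ω | sInf S + 1 / ((m : ℝ) + 1) < g ω} := by
    ext ω
    simp only [Set.mem_setOf_eq, Set.mem_iUnion]
    constructor
    · intro h
      obtain ⟨m, hm⟩ := exists_nat_one_div_lt (sub_pos.2 h)
      exact ⟨m, by linarith⟩
    · rintro ⟨m, hm⟩
      have : (0:ℝ) < 1 / ((m : ℝ) + 1) := by positivity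
      linarith
  rw [hun, Directed.measure_iUnion]
  · exact iSup_le key
  · refine (directed_of_isDirected_le ?_)
    intro i j hij
    refine Set.setOf_subset_setOf.2 fun ω hω => lt_of_le_of_lt ?_ hω
    have : 1 / ((j:ℝ)+1) ≤ 1 / ((i:ℝ)+1) := by
      apply one_div_le_one_div_of_le (by positivity)
      exact_mod_cast Nat.succ_le_succ hij
    linarith

lemma telescope' (G : ℕ → ℝ) (h : ℕ) :
    ∀ m, h ≤ m → ∑ j ∈ Finset.Ioc h m, (G j - G (j - 1)) = G m - G h := by
  intro m hm
  induction m, hm using Nat.le_induction with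
  | base => simp
  | succ m hm ih =>
    rw [Finset.sum_Ioc_succ_top (by omega), ih]
    simp only [Nat.add_sub_cancel]
    ring

lemma summable_zetaR (a : ℝ) (ha : 1 < a) : Summable (fun i : ℕ => 1 / ((i:ℝ) + 1) ^ a) := by
  have h1 : Summable (fun n : ℕ => 1 / (n:ℝ) ^ a) := Real.summable_one_div_nat_rpow.2 ha
  have := (summable_nat_add_iff 1).2 h1
  simpa using this

lemma partial_zeta (a : ℝ) (ha : 1 < a) (m : ℕ) :
    ∑ i ∈ Finset.Icc 1 m, 1 / (i:ℝ) ^ a ≤ zetaR a := by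
  have heq : ∑ i ∈ Finset.Icc 1 m, 1 / (i:ℝ) ^ a
      = ∑ i ∈ Finset.range m, 1 / ((i:ℝ) + 1) ^ a := by
    rw [← Finset.Ico_add_one_right_eq_Icc, Finset.sum_Ico_eq_sum_range]
    refine Finset.sum_congr rfl fun i _ => ?_
    push_cast
    rw [add_comm]
  rw [heq, zetaR]
  exact Summable.sum_le_tsum _ (fun i _ => by positivity) (summable_zetaR a ha)

lemma one_le_zetaR (a : ℝ) (ha : 1 < a) : (1:ℝ) ≤ zetaR a := by
  have := Summable.le_tsum (summable_zetaR a ha) 0 (fun j _ => by positivity)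
  simpa [zetaR] using this

lemma ell_tail_le {Ω X : Type*} [MeasurableSpace Ω] (P : Measure Ω) [IsProbabilityMeasure P]
    (f : Ω → X → ℝ) (x y : X) (hg : Measurable fun ω => f ω x - f ω y) (u : ℝ) :
    P {ω | ell P f u x y < f ω x - f ω y} ≤ ENNReal.ofReal (Real.exp (-u)) := by
  have := tail_sInf_le' P (fun ω => f ω x - f ω y) hg (Real.exp (-u)) (Real.exp_pos _)
  simpa [ell] using this

/-- **Generic Regret Bound.** Given a tree `T` exhausting `X` with `|T_h| ≤ e^{n_h}`, a depth
schedule `hsch`, weights `v_i = u + n_{hsch(i)} + log(i^a ζ(a))`, measurable confidence bounds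
`L_i, U_i` with `P[L_i(x,v) < f(x) < U_i(x,v)] ≥ 1 - e^{-v}` for all `x` and `v > 0`, and
queried points `x_i ∈ argmax_{x ∈ T_{hsch(i)}} U_i(x, v_i)`, for every `t ≥ 1`, with
probability at least `1 - 2e^{-u}`, the cumulative regret satisfies
`R_t = t sup_x f(x) - ∑_{i≤t} f(x_i) ≤ ∑_{i≤t} (ω_{hsch(i)} + U_i(x_i,v_i) - L_i(x_i,v_i))`. -/
theorem statement2
    {Ω X : Type*} [MeasurableSpace Ω] [MeasurableSpace X] [Fintype X] [Nonempty X]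
    (P : Measure Ω) [IsProbabilityMeasure P]
    (f : Ω → X → ℝ) (hf : Measurable f)
    (u a : ℝ) (hu : 0 < u) (ha : 1 < a)
    (n : ℕ → ℤ) (hn : Monotone n)
    (T : ChainTree X)
    (hcard : ∀ h : ℕ, ((T.level h).card : ℝ) ≤ Real.exp (n h))
    (hsch : ℕ → ℕ)
    (L U : ℕ → Ω → X → ℝ → ℝ)
    (hLmeas : ∀ i x v, Measurable fun ω => L i ω x v)
    (hUmeas : ∀ i x v, Measurable fun ω => U i ω x v)
    (hconf : ∀ i : ℕ, 1 ≤ i → ∀ x : X, ∀ v : ℝ, 0 < v →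
      P {ω | L i ω x v < f ω x ∧ f ω x < U i ω x v} ≥ ENNReal.ofReal (1 - Real.exp (-v)))
    (xq : ℕ → Ω → X) (hxqmeas : ∀ i, Measurable (xq i))
    (hargmax : ∀ i : ℕ, 1 ≤ i → ∀ ω : Ω, xq i ω ∈ T.level (hsch i) ∧
      ∀ y ∈ T.level (hsch i),
        U i ω y (chainWeight u a (fun j => n (hsch j)) i) ≤
          U i ω (xq i ω) (chainWeight u a (fun j => n (hsch j)) i)) :
    ∀ t : ℕ, 1 ≤ t →
      P {ω | (t : ℝ) * (⨆ x : X, f ω x) - ∑ i ∈ Finset.Icc 1 t, f ω (xq i ω) ≤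
          ∑ i ∈ Finset.Icc 1 t,
            (omegah P f T u a n (hsch i)
              + U i ω (xq i ω) (chainWeight u a (fun j => n (hsch j)) i)
              - L i ω (xq i ω) (chainWeight u a (fun j => n (hsch j)) i))}
        ≥ ENNReal.ofReal (1 - 2 * Real.exp (-u)) := by
  intro t ht
  classical
  set v : ℕ → ℝ := fun i => chainWeight u a (fun j => n (hsch j)) i with hvdef
  have hζ1 : (1:ℝ) ≤ zetaR a := one_le_zetaR a ha
  have hζpos : (0:ℝ) < zetaR a := lt_of_lt_of_le one_pos hζ1
  have hn0 : ∀ h : ℕ, (0:ℝ) ≤ ((n h : ℤ) : ℝ) := by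
    intro h
    have hne : (T.level h).Nonempty := ⟨T.anc h (Classical.arbitrary X), T.anc_mem h _⟩
    have h1 : (1:ℝ) ≤ ((T.level h).card : ℝ) := by exact_mod_cast Finset.card_pos.2 hne
    have := h1.trans (hcard h)
    rwa [Real.one_le_exp_iff] at this
  have hipow : ∀ i : ℕ, 1 ≤ i → (0:ℝ) < (i:ℝ) ^ a :=
    fun i hi => Real.rpow_pos_of_pos (by exact_mod_cast hi) a
  have hlogpos : ∀ i : ℕ, 1 ≤ i → (0:ℝ) ≤ Real.log ((i:ℝ) ^ a * zetaR a) := by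
    intro i hi
    apply Real.log_nonneg
    have h1 : (1:ℝ) ≤ (i:ℝ) ^ a :=
      Real.one_le_rpow (by exact_mod_cast hi) (le_of_lt (lt_trans one_pos ha))
    nlinarith
  have hcwpos : ∀ (nn : ℕ → ℤ), (∀ j, (0:ℝ) ≤ (nn j : ℝ)) → ∀ i : ℕ, 1 ≤ i →
      0 < chainWeight u a nn i := by
    intro nn hnn i hi
    have := hnn i
    have := hlogpos i hi
    unfold chainWeight
    linarith
  have hvpos : ∀ i : ℕ, 1 ≤ i → 0 < v i :=
    fun i hi => hcwpos (fun j => n (hsch j)) (fun j => hn0 (hsch j)) i hi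
  -- exponential identity
  have hexp : ∀ (nn : ℕ → ℤ) (i : ℕ), 1 ≤ i →
      Real.exp ((nn i : ℝ)) * Real.exp (-(chainWeight u a nn i))
        = Real.exp (-u) * (1 / (i:ℝ) ^ a) * (1 / zetaR a) := by
    intro nn i hi
    have hpos : (0:ℝ) < (i:ℝ) ^ a * zetaR a := mul_pos (hipow i hi) hζpos
    unfold chainWeight
    rw [← Real.exp_add,
      show ((nn i : ℝ)) + -(u + (nn i : ℝ) + Real.log ((i:ℝ) ^ a * zetaR a))
        = -u + -Real.log ((i:ℝ) ^ a * zetaR a) by ring,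
      Real.exp_add, Real.exp_neg, Real.exp_neg, Real.exp_log hpos]
    field_simp
  -- the real-number sum bound
  have hsumbound : ∀ m : ℕ,
      ∑ i ∈ Finset.Icc 1 m, Real.exp (-u) * (1 / (i:ℝ) ^ a) * (1 / zetaR a)
        ≤ Real.exp (-u) := by
    intro m
    have heq : ∑ i ∈ Finset.Icc 1 m, Real.exp (-u) * (1 / (i:ℝ) ^ a) * (1 / zetaR a)
        = (Real.exp (-u) * (1 / zetaR a)) * ∑ i ∈ Finset.Icc 1 m, 1 / (i:ℝ) ^ a := by
      rw [Finset.mul_sum]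
      exact Finset.sum_congr rfl fun i _ => by ring
    rw [heq]
    have h1 : (Real.exp (-u) * (1 / zetaR a)) * ∑ i ∈ Finset.Icc 1 m, 1 / (i:ℝ) ^ a
        ≤ (Real.exp (-u) * (1 / zetaR a)) * zetaR a :=
      mul_le_mul_of_nonneg_left (partial_zeta a ha m) (by positivity)
    refine h1.trans ?_
    rw [mul_assoc, one_div, inv_mul_cancel₀ (ne_of_gt hζpos), mul_one]
  -- measurability helpers
  have hfx : ∀ x : X, Measurable fun ω => f ω x := fun x => (measurable_pi_apply x).comp hf
  have hmeasGood : ∀ (i : ℕ) (x : X) (vv : ℝ),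
      MeasurableSet {ω | L i ω x vv < f ω x ∧ f ω x < U i ω x vv} := fun i x vv =>
    (measurableSet_lt (hLmeas i x vv) (hfx x)).inter (measurableSet_lt (hfx x) (hUmeas i x vv))
  -- bad events
  set Bad1 : Set Ω := ⋃ i ∈ Finset.Icc 1 t, ⋃ x ∈ T.level (hsch i),
      {ω | ¬ (L i ω x (v i) < f ω x ∧ f ω x < U i ω x (v i))} with hB1def
  set Bad2 : Set Ω := ⋃ j ∈ Finset.Icc 1 T.h0, ⋃ x ∈ T.level j,
      {ω | ell P f (chainWeight u a n j) x (T.anc (j-1) x)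
        < f ω x - f ω (T.anc (j-1) x)} with hB2def
  have hB1meas : MeasurableSet Bad1 := by
    refine Finset.measurableSet_biUnion _ fun i _ => Finset.measurableSet_biUnion _ fun x _ => ?_
    exact (hmeasGood i x (v i)).compl
  have hB2meas : MeasurableSet Bad2 := by
    refine Finset.measurableSet_biUnion _ fun j _ => Finset.measurableSet_biUnion _ fun x _ => ?_
    exact measurableSet_lt measurable_const ((hfx x).sub (hfx _))
  -- cardinality sum bound, generic
  have hlevel_bound : ∀ (i h' : ℕ), 1 ≤ i → ∀ (G : X → Set Ω),
      (∀ x ∈ T.level h', P (G x) ≤ ENNReal.ofReal (Real.exp (-(chainWeight u a (fun _ => n h') i)))) →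
      P (⋃ x ∈ T.level h', G x) ≤ ENNReal.ofReal (Real.exp (-u) * (1 / (i:ℝ) ^ a) * (1 / zetaR a)) := by
    intro i h' hi G hG
    calc P (⋃ x ∈ T.level h', G x) ≤ ∑ x ∈ T.level h', P (G x) :=
          measure_biUnion_finset_le _ _
      _ ≤ ∑ _x ∈ T.level h', ENNReal.ofReal (Real.exp (-(chainWeight u a (fun _ => n h') i))) :=
          Finset.sum_le_sum hG
      _ = ((T.level h').card : ENNReal) * ENNReal.ofReal (Real.exp (-(chainWeight u a (fun _ => n h') i))) := by
          rw [Finset.sum_const, nsmul_eq_mul]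
      _ = ENNReal.ofReal (((T.level h').card : ℝ) * Real.exp (-(chainWeight u a (fun _ => n h') i))) := by
          rw [ENNReal.ofReal_mul (by positivity), ENNReal.ofReal_natCast]
      _ ≤ ENNReal.ofReal (Real.exp ((n h' : ℝ)) * Real.exp (-(chainWeight u a (fun _ => n h') i))) := by
          apply ENNReal.ofReal_le_ofReal
          exact mul_le_mul_of_nonneg_right (hcard h') (Real.exp_pos _).le
      _ = ENNReal.ofReal (Real.exp (-u) * (1 / (i:ℝ) ^ a) * (1 / zetaR a)) := by
          rw [hexp (fun _ => n h') i hi]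
  have hB1bound : P Bad1 ≤ ENNReal.ofReal (Real.exp (-u)) := by
    calc P Bad1 ≤ ∑ i ∈ Finset.Icc 1 t, P (⋃ x ∈ T.level (hsch i),
          {ω | ¬ (L i ω x (v i) < f ω x ∧ f ω x < U i ω x (v i))}) :=
        measure_biUnion_finset_le _ _
      _ ≤ ∑ i ∈ Finset.Icc 1 t, ENNReal.ofReal (Real.exp (-u) * (1 / (i:ℝ) ^ a) * (1 / zetaR a)) := by
        refine Finset.sum_le_sum fun i hi => ?_
        have hi1 : 1 ≤ i := (Finset.mem_Icc.1 hi).1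
        refine hlevel_bound i (hsch i) hi1 _ fun x hx => ?_
        have hvp := hvpos i hi1
        have hc := hconf i hi1 x (v i) hvp
        have hcompl : {ω | ¬ (L i ω x (v i) < f ω x ∧ f ω x < U i ω x (v i))}
            = {ω | L i ω x (v i) < f ω x ∧ f ω x < U i ω x (v i)}ᶜ := rfl
        rw [hcompl, prob_compl_eq_one_sub (hmeasGood i x (v i))]
        have hexp1 : Real.exp (-(v i)) ≤ 1 := Real.exp_le_one_iff.2 (by linarith)
        have h1 : (1:ENNReal) = ENNReal.ofReal (1 - Real.exp (-(v i)))
            + ENNReal.ofReal (Real.exp (-(v i))) := by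
          rw [← ENNReal.ofReal_add (by linarith) (Real.exp_pos _).le]
          norm_num
        calc (1:ENNReal) - P {ω | L i ω x (v i) < f ω x ∧ f ω x < U i ω x (v i)}
            ≤ 1 - ENNReal.ofReal (1 - Real.exp (-(v i))) := tsub_le_tsub_left hc _
          _ = ENNReal.ofReal (Real.exp (-(v i))) := by
              rw [h1, ENNReal.add_sub_cancel_left ENNReal.ofReal_ne_top]
          _ = ENNReal.ofReal (Real.exp (-(chainWeight u a (fun _ => n (hsch i)) i))) := rfl
      _ = ENNReal.ofReal (∑ i ∈ Finset.Icc 1 t, Real.exp (-u) * (1 / (i:ℝ) ^ a) * (1 / zetaR a)) :=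
        (ENNReal.ofReal_sum_of_nonneg fun i hi => by positivity).symm
      _ ≤ ENNReal.ofReal (Real.exp (-u)) := ENNReal.ofReal_le_ofReal (hsumbound t)
  have hB2bound : P Bad2 ≤ ENNReal.ofReal (Real.exp (-u)) := by
    calc P Bad2 ≤ ∑ j ∈ Finset.Icc 1 T.h0, P (⋃ x ∈ T.level j,
          {ω | ell P f (chainWeight u a n j) x (T.anc (j-1) x)
            < f ω x - f ω (T.anc (j-1) x)}) := measure_biUnion_finset_le _ _
      _ ≤ ∑ j ∈ Finset.Icc 1 T.h0,
          ENNReal.ofReal (Real.exp (-u) * (1 / (j:ℝ) ^ a) * (1 / zetaR a)) := by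
        refine Finset.sum_le_sum fun j hj => ?_
        have hj1 : 1 ≤ j := (Finset.mem_Icc.1 hj).1
        refine hlevel_bound j j hj1 _ fun x hx => ?_
        exact ell_tail_le P f x (T.anc (j-1) x) ((hfx x).sub (hfx _)) (chainWeight u a n j)
      _ = ENNReal.ofReal (∑ j ∈ Finset.Icc 1 T.h0,
            Real.exp (-u) * (1 / (j:ℝ) ^ a) * (1 / zetaR a)) :=
        (ENNReal.ofReal_sum_of_nonneg fun j hj => by positivity).symm
      _ ≤ ENNReal.ofReal (Real.exp (-u)) := ENNReal.ofReal_le_ofReal (hsumbound T.h0)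
  -- the good event implies the regret bound
  have hGoodsub : (Bad1 ∪ Bad2)ᶜ ⊆ {ω | (t : ℝ) * (⨆ x : X, f ω x)
      - ∑ i ∈ Finset.Icc 1 t, f ω (xq i ω) ≤
      ∑ i ∈ Finset.Icc 1 t, (omegah P f T u a n (hsch i)
        + U i ω (xq i ω) (v i) - L i ω (xq i ω) (v i))} := by
    intro ω hω
    have hω1 : ω ∉ Bad1 := fun hmem => hω (Or.inl hmem)
    have hω2 : ω ∉ Bad2 := fun hmem => hω (Or.inr hmem)
    have hg1 : ∀ i ∈ Finset.Icc 1 t, ∀ x ∈ T.level (hsch i),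
        L i ω x (v i) < f ω x ∧ f ω x < U i ω x (v i) := by
      intro i hi x hx
      by_contra hcon
      exact hω1 (Set.mem_iUnion₂.2 ⟨i, hi, Set.mem_iUnion₂.2 ⟨x, hx, hcon⟩⟩)
    have hg2 : ∀ j ∈ Finset.Icc 1 T.h0, ∀ x ∈ T.level j,
        f ω x - f ω (T.anc (j-1) x) ≤ ell P f (chainWeight u a n j) x (T.anc (j-1) x) := by
      intro j hj x hx
      by_contra hcon
      push_neg at hcon
      exact hω2 (Set.mem_iUnion₂.2 ⟨j, hj, Set.mem_iUnion₂.2 ⟨x, hx, hcon⟩⟩)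
    have hchain : ∀ (x : X) (h : ℕ), f ω x - f ω (T.anc h x) ≤ omegah P f T u a n h := by
      intro x h
      rcases le_or_gt h T.h0 with hle | hgt
      · have htel : f ω x - f ω (T.anc h x)
            = ∑ j ∈ Finset.Ioc h T.h0, (f ω (T.anc j x) - f ω (T.anc (j-1) x)) := by
          have h2 := telescope' (fun j => f ω (T.anc j x)) h T.h0 hle
          simp only [T.anc_deep T.h0 x le_rfl] at h2
          exact h2.symm
        rw [htel]
        have hsum : ∑ j ∈ Finset.Ioc h T.h0, (f ω (T.anc j x) - f ω (T.anc (j-1) x))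
            ≤ ∑ j ∈ Finset.Ioc h T.h0,
              ell P f (chainWeight u a n j) (T.anc j x) (T.anc (j-1) x) := by
          refine Finset.sum_le_sum fun j hj => ?_
          obtain ⟨hj1, hj2⟩ := Finset.mem_Ioc.1 hj
          have := hg2 j (Finset.mem_Icc.2 ⟨by omega, hj2⟩) (T.anc j x) (T.anc_mem j x)
          rwa [T.anc_anc (j-1) j x (by omega)] at this
        refine hsum.trans ?_
        unfold omegah
        exact le_ciSup (f := fun y : X => ∑ i ∈ Finset.Ioc h T.h0,
          ell P f (chainWeight u a n i) (T.anc i y) (T.anc (i - 1) y))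
          (Set.Finite.bddAbove (Set.finite_range _)) x
      · rw [T.anc_deep h x hgt.le, sub_self]
        unfold omegah
        rw [Finset.Ioc_eq_empty (by omega)]
        simp [ciSup_const]
    have hstep : ∀ i ∈ Finset.Icc 1 t, (⨆ x : X, f ω x) - f ω (xq i ω) ≤
        omegah P f T u a n (hsch i) + U i ω (xq i ω) (v i) - L i ω (xq i ω) (v i) := by
      intro i hi
      obtain ⟨xs, hxs⟩ := exists_eq_ciSup_of_finite (f := fun x => f ω x)
      obtain ⟨hmem, hmax⟩ := hargmax i (Finset.mem_Icc.1 hi).1 ω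
      have h1 := hchain xs (hsch i)
      have h2 := (hg1 i hi _ (T.anc_mem (hsch i) xs)).2
      have h3 := hmax (T.anc (hsch i) xs) (T.anc_mem _ _)
      have h4 := (hg1 i hi _ hmem).1
      rw [← hxs]
      linarith
    simp only [Set.mem_setOf_eq]
    have hrw : (t : ℝ) * (⨆ x : X, f ω x) - ∑ i ∈ Finset.Icc 1 t, f ω (xq i ω)
        = ∑ i ∈ Finset.Icc 1 t, ((⨆ x : X, f ω x) - f ω (xq i ω)) := by
      rw [Finset.sum_sub_distrib, Finset.sum_const, Nat.card_Icc]
      simp [nsmul_eq_mul]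
    rw [hrw]
    exact Finset.sum_le_sum hstep
  -- conclusion
  have hbadmeas : MeasurableSet (Bad1 ∪ Bad2) := hB1meas.union hB2meas
  have hbadbound : P (Bad1 ∪ Bad2) ≤ ENNReal.ofReal (2 * Real.exp (-u)) := by
    calc P (Bad1 ∪ Bad2) ≤ P Bad1 + P Bad2 := measure_union_le _ _
      _ ≤ ENNReal.ofReal (Real.exp (-u)) + ENNReal.ofReal (Real.exp (-u)) :=
        add_le_add hB1bound hB2bound
      _ = ENNReal.ofReal (2 * Real.exp (-u)) := by
        rw [← ENNReal.ofReal_add (Real.exp_pos _).le (Real.exp_pos _).le]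
        ring_nf
  calc ENNReal.ofReal (1 - 2 * Real.exp (-u))
      = ENNReal.ofReal 1 - ENNReal.ofReal (2 * Real.exp (-u)) :=
        ENNReal.ofReal_sub 1 (by positivity)
    _ = 1 - ENNReal.ofReal (2 * Real.exp (-u)) := by rw [ENNReal.ofReal_one]
    _ ≤ 1 - P (Bad1 ∪ Bad2) := tsub_le_tsub_left hbadbound 1
    _ = P (Bad1 ∪ Bad2)ᶜ := (prob_compl_eq_one_sub hbadmeas).symm
    _ ≤ _ := measure_mono hGoodsub

end
end

section
/- Let f be a (d,ψ)-process on the finite set X such that for each fixed λ ∈ I the map δ ↦ ψ(λ,δ) is nondecreasing. Fix u > 0, a > 1 and an increasing sequence of integers (n_h), and set u_i = u + n_i + log(i^a ζ(a)) for i ≥ 1, where ζ is the Riemann zeta function. Then for any tree T = (T_h)_{h≥0} on X whose nodes exhaust X and which satisfies |T_h| ≤ e^{n_h} for every h, with probability at least 1 − e^{−u} it holds that for all h ≥ 0 and all s ∈ T_h, sup_{x ≻ s} (f(x) − f(s)) ≤ sup_{x∈X} Σ_{i>h} ψ^{*−1}(u_i, Δ_{i−1}(x)), where Δ_i(x) =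 sup_{x' ≻ p_i(x)} d(x', p_i(x)) is the d-radius of the cell at depth i containing x. -/
open MeasureTheory Real

noncomputable section

/-- The Fenchel–Legendre dual `ψ*(s,δ) = sup_{λ ∈ I} (λ s - ψ(λ,δ))`, valued in `EReal`. -/
def psiStar (I : Set ℝ) (ψ : ℝ → ℝ → ℝ) (s δ : ℝ) : EReal :=
  ⨆ lam ∈ I, ((lam * s - ψ lam δ : ℝ) : EReal)

/-- The generalized inverse `ψ^{*-1}(u,δ) = inf{s : ψ*(s,δ) > u}`. -/
def psiStarInv (I : Set ℝ) (ψ : ℝ → ℝ → ℝ) (u δ : ℝ) : ℝ :=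
  sInf {s : ℝ | (u : EReal) < psiStar I ψ s δ}

/-- `Δ_i(x) = sup_{x' ≻ p_i(x)} d(x', p_i(x))`, the `d`-radius of the cell at depth `i`
containing `x`. -/
def cellRadius {X : Type*} (T : ChainTree X) (d : X → X → ℝ) (i : ℕ) (x : X) : ℝ :=
  sSup {v : ℝ | ∃ x' : X, T.anc i x' = T.anc i x ∧ v = d x' (T.anc i x)}


/-- Measure bound at the infimum of an upward-closed set of thresholds. -/
lemma aux_measure_sInf_lt {Ω : Type*} [MeasurableSpace Ω] (P : Measure Ω)
    (g : Ω → ℝ) (S : Set ℝ) (hS : S.Nonempty)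
    (hup : ∀ s ∈ S, ∀ s', s ≤ s' → s' ∈ S)
    (ε : ENNReal) (hb : ∀ s ∈ S, P {ω | s < g ω} ≤ ε) :
    P {ω | sInf S < g ω} ≤ ε := by
  obtain ⟨sq, hmem, hanti, hcov⟩ :
      ∃ sq : ℕ → ℝ, (∀ m, sq m ∈ S) ∧ Antitone sq ∧
        (∀ r, sInf S < r → ∃ m, sq m < r) := by
    by_cases hbd : BddBelow S
    · refine ⟨fun m => sInf S + 1 / (m + 1), fun m => ?_, ?_, fun r hr => ?_⟩
      · obtain ⟨b, hbS, hblt⟩ := Real.lt_sInf_add_pos hS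
          (show (0:ℝ) < 1 / (m + 1) by positivity)
        exact hup b hbS _ hblt.le
      · intro m m' hmm
        have : (1:ℝ) / (m' + 1) ≤ 1 / (m + 1) := by
          apply one_div_le_one_div_of_le (by positivity)
          exact_mod_cast by exact_mod_cast add_le_add_left (Nat.cast_le.mpr hmm) 1
        linarith
      · obtain ⟨m, hm⟩ := exists_nat_one_div_lt (show (0:ℝ) < r - sInf S by linarith)
        exact ⟨m, by linarith⟩
    · refine ⟨fun m => -(m : ℝ), fun m => ?_, ?_, fun r _ => ?_⟩
      · obtain ⟨b, hbS, hblt⟩ := not_bddBelow_iff.mp hbd (-(m:ℝ))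
        exact hup b hbS _ hblt.le
      · intro m m' hmm
        simpa using (Nat.cast_le (α := ℝ)).mpr hmm
      · obtain ⟨m, hm⟩ := exists_nat_gt (-r)
        exact ⟨m, neg_lt.mpr hm⟩
  have hcover : {ω | sInf S < g ω} ⊆ ⋃ m : ℕ, {ω | sq m < g ω} := by
    intro ω hω
    obtain ⟨m, hm⟩ := hcov _ hω
    exact Set.mem_iUnion.mpr ⟨m, hm⟩
  have hmono : Monotone (fun m : ℕ => {ω | sq m < g ω}) := by
    intro m m' hmm ω hω
    exact lt_of_le_of_lt (hanti hmm) hω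
  calc P {ω | sInf S < g ω} ≤ P (⋃ m : ℕ, {ω | sq m < g ω}) := measure_mono hcover
    _ = ⨆ m, P {ω | sq m < g ω} := (hmono.directed_le).measure_iUnion
    _ ≤ ε := iSup_le fun m => hb _ (hmem m)


lemma aux_chernoff {Ω X : Type*} [MeasurableSpace Ω] [PseudoMetricSpace X]
    (P : Measure Ω) [IsProbabilityMeasure P] (f : Ω → X → ℝ)
    (I : Set ℝ) (hI : I ⊆ Set.Ici 0) (hIpos : ∃ lam ∈ I, 0 < lam)
    (ψ : ℝ → ℝ → ℝ)
    (hψmono : ∀ lam ∈ I, ∀ δ δ' : ℝ, 0 ≤ δ → δ ≤ δ' → ψ lam δ ≤ ψ lam δ')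
    (hint : ∀ x y : X, ∀ lam ∈ I,
      Integrable (fun ω => Real.exp (lam * (f ω x - f ω y))) P)
    (hmgf : ∀ x y : X, ∀ lam ∈ I,
      Real.log (∫ ω, Real.exp (lam * (f ω x - f ω y)) ∂P) ≤ ψ lam (dist x y))
    (x y : X) (u' δ : ℝ) (hu' : 0 < u') (hδ : dist x y ≤ δ) :
    P {ω | psiStarInv I ψ u' δ < f ω x - f ω y} ≤ ENNReal.ofReal (Real.exp (-u')) := by
  have hd0 : (0:ℝ) ≤ dist x y := dist_nonneg
  have hδ0 : (0:ℝ) ≤ δ := hd0.trans hδ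
  set S : Set ℝ := {s : ℝ | (u' : EReal) < psiStar I ψ s δ} with hSdef
  have hψδ : ∀ lam ∈ I, (0:ℝ) ≤ ψ lam δ := by
    intro lam hlam
    have h1 := hmgf x x lam hlam
    simp only [sub_self, mul_zero, Real.exp_zero, integral_const, measure_univ,
      ENNReal.toReal_one, probReal_univ, smul_eq_mul, one_mul, Real.log_one] at h1
    calc (0:ℝ) ≤ ψ lam (dist x x) := h1
      _ ≤ ψ lam δ := hψmono lam hlam _ _ dist_nonneg (by rw [dist_self]; exact hδ0)
  apply aux_measure_sInf_lt
  · -- Nonempty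
    obtain ⟨l0, hl0I, hl0⟩ := hIpos
    refine ⟨(u' + 1 + ψ l0 δ) / l0, ?_⟩
    have h1 : (u' : EReal) < ((l0 * ((u' + 1 + ψ l0 δ) / l0) - ψ l0 δ : ℝ) : EReal) := by
      rw [mul_div_cancel₀ _ hl0.ne']
      exact_mod_cast by linarith
    show (u' : EReal) < psiStar I ψ _ δ
    rw [psiStar]
    exact lt_of_lt_of_le h1 (le_iSup₂ (f := fun lam (_ : lam ∈ I) =>
      ((lam * ((u' + 1 + ψ l0 δ) / l0) - ψ lam δ : ℝ) : EReal)) l0 hl0I)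
  · -- upward closed
    intro s hs s' hss'
    simp only [Set.mem_setOf_eq] at hs ⊢
    refine lt_of_lt_of_le hs ?_
    apply iSup₂_mono
    intro lam hlam
    have : lam * s - ψ lam δ ≤ lam * s' - ψ lam δ := by
      have h0 : 0 ≤ lam := hI hlam
      nlinarith
    exact_mod_cast this
  · -- bound for each s ∈ S
    intro s hs
    rw [Set.mem_setOf_eq, psiStar, lt_iSup_iff] at hs
    obtain ⟨lam, hs⟩ := hs
    rw [lt_iSup_iff] at hs
    obtain ⟨hlamI, hs⟩ := hs
    have hs : u' < lam * s - ψ lam δ := by exact_mod_cast hs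
    have hlam0 : 0 ≤ lam := hI hlamI
    have hlampos : 0 < lam := by
      rcases hlam0.eq_or_lt with h | h
      · exfalso
        have hψ0 := hψδ lam hlamI
        subst h
        simp only [zero_mul, zero_sub] at hs
        linarith
      · exact h
    -- Chernoff
    have hmark := ProbabilityTheory.measure_ge_le_exp_mul_mgf (μ := P)
      (X := fun ω => f ω x - f ω y) (t := lam) s hlam0 (hint x y lam hlamI)
    have hmgfval : ProbabilityTheory.mgf (fun ω => f ω x - f ω y) P lam
        = ∫ ω, Real.exp (lam * (f ω x - f ω y)) ∂P := rfl
    have hpos : 0 < ProbabilityTheory.mgf (fun ω => f ω x - f ω y) P lam :=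
      ProbabilityTheory.mgf_pos' (IsProbabilityMeasure.ne_zero P) (hint x y lam hlamI)
    have hmle : ProbabilityTheory.mgf (fun ω => f ω x - f ω y) P lam ≤ Real.exp (ψ lam δ) := by
      rw [← Real.exp_log hpos]
      apply Real.exp_le_exp.mpr
      rw [hmgfval]
      exact (hmgf x y lam hlamI).trans (hψmono lam hlamI _ _ hd0 hδ)
    have hfin : (P {ω | s ≤ f ω x - f ω y}).toReal ≤ Real.exp (-u') := by
      calc (P {ω | s ≤ f ω x - f ω y}).toReal
          ≤ Real.exp (-lam * s) * ProbabilityTheory.mgf (fun ω => f ω x - f ω y) P lam := hmark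
        _ ≤ Real.exp (-lam * s) * Real.exp (ψ lam δ) := by
            apply mul_le_mul_of_nonneg_left hmle (Real.exp_pos _).le
        _ = Real.exp (ψ lam δ - lam * s) := by rw [← Real.exp_add]; ring_nf
        _ ≤ Real.exp (-u') := Real.exp_le_exp.mpr (by linarith)
    calc P {ω | s < f ω x - f ω y} ≤ P {ω | s ≤ f ω x - f ω y} :=
          measure_mono (Set.setOf_subset_setOf.mpr (fun ω => le_of_lt))
      _ = ENNReal.ofReal ((P {ω | s ≤ f ω x - f ω y}).toReal) :=
          (ENNReal.ofReal_toReal (measure_ne_top _ _)).symm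
      _ ≤ ENNReal.ofReal (Real.exp (-u')) := ENNReal.ofReal_le_ofReal hfin


lemma aux_telescope (G : ℕ → ℝ) : ∀ m h : ℕ, h ≤ m →
    ∑ i ∈ Finset.Ioc h m, (G i - G (i - 1)) = G m - G h := by
  intro m
  induction m with
  | zero => intro h hh; interval_cases h; simp
  | succ m ih =>
    intro h hh
    rcases Nat.lt_or_ge h (m + 1) with h1 | h1
    · have h2 : h ≤ m := Nat.lt_succ_iff.mp h1
      rw [Finset.sum_Ioc_succ_top h2, ih h h2]
      simp only [Nat.add_sub_cancel]
      ring
    · have h3 : h = m + 1 := le_antisymm hh h1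
      subst h3
      simp

lemma aux_shift (g : ℕ → ℝ) (m : ℕ) :
    ∑ i ∈ Finset.Ioc 0 m, g i = ∑ j ∈ Finset.range m, g (j + 1) := by
  induction m with
  | zero => simp
  | succ m ih =>
    rw [Finset.sum_Ioc_succ_top (Nat.zero_le _), Finset.sum_range_succ, ih]

/-- **Generic chaining bound for `(d,ψ)`-processes.** If `f` is a `(d,ψ)`-process with
`δ ↦ ψ(λ,δ)` nondecreasing, then for any tree `T` exhausting `X` with `|T_h| ≤ e^{n_h}`,
with probability at least `1 - e^{-u}`, for all `h` and `s ∈ T_h`,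
`sup_{x ≻ s} f(x) - f(s) ≤ sup_{x ∈ X} ∑_{i > h} ψ^{*-1}(u_i, Δ_{i-1}(x))`. -/
theorem statement3
    {Ω X : Type*} [MeasurableSpace Ω] [Fintype X] [Nonempty X] [PseudoMetricSpace X]
    (P : Measure Ω) [IsProbabilityMeasure P]
    (f : Ω → X → ℝ) (hf : Measurable f)
    (I : Set ℝ) (hI : I ⊆ Set.Ici 0) (hIpos : ∃ lam ∈ I, 0 < lam)
    (ψ : ℝ → ℝ → ℝ)
    (hψmono : ∀ lam ∈ I, ∀ δ δ' : ℝ, 0 ≤ δ → δ ≤ δ' → ψ lam δ ≤ ψ lam δ')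
    (hint : ∀ x y : X, ∀ lam ∈ I,
      Integrable (fun ω => Real.exp (lam * (f ω x - f ω y))) P)
    (hmgf : ∀ x y : X, ∀ lam ∈ I,
      Real.log (∫ ω, Real.exp (lam * (f ω x - f ω y)) ∂P) ≤ ψ lam (dist x y))
    (u a : ℝ) (hu : 0 < u) (ha : 1 < a)
    (n : ℕ → ℤ) (hn : Monotone n)
    (T : ChainTree X)
    (hcard : ∀ h : ℕ, ((T.level h).card : ℝ) ≤ Real.exp (n h)) :
    P {ω | ∀ h : ℕ, ∀ s ∈ T.level h, ∀ x : X, T.anc h x = s →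
        f ω x - f ω s ≤ ⨆ x' : X, ∑ i ∈ Finset.Ioc h T.h0,
          psiStarInv I ψ (chainWeight u a n i) (cellRadius T (fun p q => dist p q) (i - 1) x')}
      ≥ ENNReal.ofReal (1 - Real.exp (-u)) := by
  classical
  have hζsum : Summable (fun i : ℕ => 1 / ((i : ℝ) + 1) ^ a) := by
    have h1 := Real.summable_one_div_nat_rpow.mpr ha
    have h2 := (summable_nat_add_iff 1).mpr h1
    refine h2.congr fun i => ?_
    push_cast
    ring_nf
  have hζ1 : (1 : ℝ) ≤ zetaR a := by
    have h0 := Summable.le_tsum hζsum 0 (fun j _ => by positivity)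
    simpa [zetaR] using h0
  have hζpos : (0 : ℝ) < zetaR a := lt_of_lt_of_le one_pos hζ1
  have hlevelpos : ∀ i, 1 ≤ (T.level i).card := fun i =>
    Finset.card_pos.mpr ⟨T.anc i (Classical.arbitrary X), T.anc_mem i _⟩
  have hn0 : ∀ i, (0 : ℝ) ≤ (n i : ℝ) := by
    intro i
    have h1 : (1 : ℝ) ≤ Real.exp (n i) :=
      le_trans (by exact_mod_cast hlevelpos i) (hcard i)
    rw [show (1 : ℝ) = Real.exp 0 by simp] at h1
    exact Real.exp_le_exp.mp h1
  have hipow : ∀ i : ℕ, 1 ≤ i → (1 : ℝ) ≤ (i : ℝ) ^ a * zetaR a := by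
    intro i hi
    have h1 : (1 : ℝ) ≤ (i : ℝ) := by exact_mod_cast hi
    have h2 : (1 : ℝ) ≤ (i : ℝ) ^ a := Real.one_le_rpow h1 (by linarith)
    nlinarith
  have hupos : ∀ i : ℕ, 1 ≤ i → 0 < chainWeight u a n i := by
    intro i hi
    unfold chainWeight
    have h1 := Real.log_nonneg (hipow i hi)
    have h2 := hn0 i
    linarith
  set d : X → X → ℝ := fun p q => dist p q with hd
  have hbdd : ∀ (j : ℕ) (x : X),
      BddAbove {v : ℝ | ∃ x' : X, T.anc j x' = T.anc j x ∧ v = d x' (T.anc j x)} := by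
    intro j x
    apply Set.Finite.bddAbove
    apply Set.Finite.subset (Set.finite_univ.image (fun x' => d x' (T.anc j x)))
    rintro v ⟨x', _, rfl⟩
    exact ⟨x', trivial, rfl⟩
  have hcelldist : ∀ (j : ℕ) (s : X), dist s (T.anc j s) ≤ cellRadius T d j s :=
    fun j s => le_csSup (hbdd j s) ⟨s, rfl, rfl⟩
  set E : ℕ → X → Set Ω := fun i s =>
    {ω | psiStarInv I ψ (chainWeight u a n i) (cellRadius T d (i - 1) s)
      < f ω s - f ω (T.anc (i - 1) s)} with hE
  have hEmeas : ∀ i s, MeasurableSet (E i s) := by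
    intro i s
    have h1 : Measurable fun ω => f ω s - f ω (T.anc (i - 1) s) :=
      ((measurable_pi_apply s).comp hf).sub ((measurable_pi_apply _).comp hf)
    exact measurableSet_lt measurable_const h1
  have hPE : ∀ i, 1 ≤ i → ∀ s,
      P (E i s) ≤ ENNReal.ofReal (Real.exp (-(chainWeight u a n i))) := by
    intro i hi s
    exact aux_chernoff P f I hI hIpos ψ hψmono hint hmgf s (T.anc (i - 1) s) _ _
      (hupos i hi) (hcelldist (i - 1) s)
  set B : Set Ω := ⋃ i ∈ Finset.Ioc 0 T.h0, ⋃ s ∈ T.level i, E i s with hB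
  have hBmeas : MeasurableSet B := by
    apply MeasurableSet.biUnion (Finset.Ioc 0 T.h0).countable_toSet
    intro i _
    exact MeasurableSet.biUnion (T.level i).countable_toSet (fun s _ => hEmeas i s)
  have hPB : P B ≤ ENNReal.ofReal (Real.exp (-u)) := by
    have hexp : ∀ i : ℕ, 1 ≤ i →
        Real.exp (n i) * Real.exp (-(chainWeight u a n i))
          = Real.exp (-u) * (1 / ((i : ℝ) ^ a * zetaR a)) := by
      intro i hi
      have hp : (0 : ℝ) < (i : ℝ) ^ a * zetaR a := lt_of_lt_of_le one_pos (hipow i hi)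
      rw [← Real.exp_add]
      unfold chainWeight
      rw [show (n i : ℝ) + -(u + (n i : ℝ) + Real.log ((i : ℝ) ^ a * zetaR a))
        = -u + -Real.log ((i : ℝ) ^ a * zetaR a) by ring]
      rw [Real.exp_add]
      congr 1
      rw [Real.exp_neg, Real.exp_log hp, one_div]
    calc P B ≤ ∑ i ∈ Finset.Ioc 0 T.h0, P (⋃ s ∈ T.level i, E i s) :=
          measure_biUnion_finset_le _ _
      _ ≤ ∑ i ∈ Finset.Ioc 0 T.h0, ENNReal.ofReal (Real.exp (-u) * (1 / ((i : ℝ) ^ a * zetaR a))) := by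
          apply Finset.sum_le_sum
          intro i hi
          obtain ⟨hi1, _⟩ := Finset.mem_Ioc.mp hi
          calc P (⋃ s ∈ T.level i, E i s) ≤ ∑ s ∈ T.level i, P (E i s) :=
                measure_biUnion_finset_le _ _
            _ ≤ ∑ _s ∈ T.level i, ENNReal.ofReal (Real.exp (-(chainWeight u a n i))) :=
                Finset.sum_le_sum (fun s _ => hPE i hi1 s)
            _ = ((T.level i).card : ENNReal) * ENNReal.ofReal (Real.exp (-(chainWeight u a n i))) := by
                rw [Finset.sum_const, nsmul_eq_mul]
            _ ≤ ENNReal.ofReal (Real.exp (n i)) * ENNReal.ofReal (Real.exp (-(chainWeight u a n i))) := by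
                apply mul_le_mul_left
                rw [show ((T.level i).card : ENNReal) = ENNReal.ofReal ((T.level i).card : ℝ) by
                  simp [ENNReal.ofReal_natCast]]
                exact ENNReal.ofReal_le_ofReal (hcard i)
            _ = ENNReal.ofReal (Real.exp (-u) * (1 / ((i : ℝ) ^ a * zetaR a))) := by
                rw [← ENNReal.ofReal_mul (Real.exp_pos _).le, hexp i hi1]
      _ = ENNReal.ofReal (∑ i ∈ Finset.Ioc 0 T.h0, Real.exp (-u) * (1 / ((i : ℝ) ^ a * zetaR a))) := by
          rw [ENNReal.ofReal_sum_of_nonneg]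
          intro i _
          positivity
      _ ≤ ENNReal.ofReal (Real.exp (-u)) := by
          apply ENNReal.ofReal_le_ofReal
          have hps : ∑ i ∈ Finset.Ioc 0 T.h0, 1 / ((i : ℝ) ^ a * zetaR a)
              ≤ 1 := by
            have hsum1 : ∑ i ∈ Finset.Ioc 0 T.h0, 1 / ((i : ℝ)) ^ a ≤ zetaR a := by
              have heq : ∑ i ∈ Finset.Ioc 0 T.h0, 1 / ((i : ℝ)) ^ a
                  = ∑ j ∈ Finset.range T.h0, 1 / ((j : ℝ) + 1) ^ a := by
                rw [aux_shift (fun i => 1 / ((i : ℝ)) ^ a) T.h0]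
                exact Finset.sum_congr rfl fun j _ => by push_cast; ring_nf
              rw [heq]
              exact Summable.sum_le_tsum (Finset.range T.h0) (fun j _ => by positivity) hζsum
            have : ∑ i ∈ Finset.Ioc 0 T.h0, 1 / ((i : ℝ) ^ a * zetaR a)
                = (∑ i ∈ Finset.Ioc 0 T.h0, 1 / ((i : ℝ)) ^ a) / zetaR a := by
              rw [Finset.sum_div]
              apply Finset.sum_congr rfl
              intro i _
              rw [div_div]
            rw [this]
            rw [div_le_one hζpos]
            exact hsum1
          calc ∑ i ∈ Finset.Ioc 0 T.h0, Real.exp (-u) * (1 / ((i : ℝ) ^ a * zetaR a))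
              = Real.exp (-u) * ∑ i ∈ Finset.Ioc 0 T.h0, 1 / ((i : ℝ) ^ a * zetaR a) := by
                rw [Finset.mul_sum]
            _ ≤ Real.exp (-u) * 1 := by
                apply mul_le_mul_of_nonneg_left hps (Real.exp_pos _).le
            _ = Real.exp (-u) := mul_one _
  have hincl : Bᶜ ⊆ {ω | ∀ h : ℕ, ∀ s ∈ T.level h, ∀ x : X, T.anc h x = s →
      f ω x - f ω s ≤ ⨆ x' : X, ∑ i ∈ Finset.Ioc h T.h0,
        psiStarInv I ψ (chainWeight u a n i) (cellRadius T d (i - 1) x')} := by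
    intro ω hω
    simp only [Set.mem_setOf_eq]
    intro h s hs x hx
    rcases le_or_gt h T.h0 with hh | hh
    · have htel := aux_telescope (fun i => f ω (T.anc i x)) T.h0 h hh
      have hxtop : T.anc T.h0 x = x := T.anc_deep T.h0 x le_rfl
      have htel' : ∑ i ∈ Finset.Ioc h T.h0, (f ω (T.anc i x) - f ω (T.anc (i - 1) x))
          = f ω (T.anc T.h0 x) - f ω (T.anc h x) := htel
      rw [hxtop, hx] at htel'
      rw [← htel']
      have hterm : ∀ i ∈ Finset.Ioc h T.h0, f ω (T.anc i x) - f ω (T.anc (i - 1) x)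
          ≤ psiStarInv I ψ (chainWeight u a n i) (cellRadius T d (i - 1) x) := by
        intro i hi
        obtain ⟨hi1, hi2⟩ := Finset.mem_Ioc.mp hi
        have hnotin : ω ∉ E i (T.anc i x) := by
          intro hmem
          apply hω
          exact Set.mem_biUnion (Finset.mem_Ioc.mpr ⟨Nat.pos_of_ne_zero (by omega), hi2⟩)
            (Set.mem_biUnion (T.anc_mem i x) hmem)
        simp only [hE, Set.mem_setOf_eq, not_lt] at hnotin
        have hanc : T.anc (i - 1) (T.anc i x) = T.anc (i - 1) x :=
          T.anc_anc (i - 1) i x (Nat.sub_le i 1)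
        have hcelleq : cellRadius T d (i - 1) (T.anc i x) = cellRadius T d (i - 1) x := by
          unfold cellRadius
          rw [hanc]
        rw [hanc, hcelleq] at hnotin
        exact hnotin
      calc ∑ i ∈ Finset.Ioc h T.h0, (f ω (T.anc i x) - f ω (T.anc (i - 1) x))
          ≤ ∑ i ∈ Finset.Ioc h T.h0,
            psiStarInv I ψ (chainWeight u a n i) (cellRadius T d (i - 1) x) :=
            Finset.sum_le_sum hterm
        _ ≤ ⨆ x' : X, ∑ i ∈ Finset.Ioc h T.h0,
            psiStarInv I ψ (chainWeight u a n i) (cellRadius T d (i - 1) x') :=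
            le_ciSup (f := fun x' : X => ∑ i ∈ Finset.Ioc h T.h0,
              psiStarInv I ψ (chainWeight u a n i) (cellRadius T d (i - 1) x'))
              (Finite.bddAbove_range _) x
    · have hempty : Finset.Ioc h T.h0 = ∅ := Finset.Ioc_eq_empty (not_lt.mpr hh.le)
      have hxx : T.anc h x = x := T.anc_deep h x hh.le
      rw [← hx, hxx, sub_self, hempty]
      simp
  rw [ge_iff_le]
  calc ENNReal.ofReal (1 - Real.exp (-u)) = 1 - ENNReal.ofReal (Real.exp (-u)) := by
        rw [ENNReal.ofReal_sub _ (Real.exp_pos _).le, ENNReal.ofReal_one]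
    _ ≤ 1 - P B := tsub_le_tsub_left hPB 1
    _ = P Bᶜ := (prob_compl_eq_one_sub hBmeas).symm
    _ ≤ _ := measure_mono hincl


end
end

section
/- Let (f(x))_{x∈X} be a centered Gaussian vector indexed by the finite set X, with canonical pseudo-metric d(x,y) = (E[(f(x) − f(y))²])^{1/2}. Fix u > 0 and a > 1, and let T = (T_h)_{h≥0} be any tree on X whose nodes exhaust X and which satisfies |T_h| ≤ e^{2^h} for all h ≥ 1 and |T_0| = 1. Then there exists a constant c_u > 0, depending only on u and a, such that with probability at least 1 − e^{−u}, for all h ≥ 0 and all s ∈ T_h: sup_{x ≻ s} (f(x) − f(s)) ≤ c_u · sup_{x ≻ s} Σ_{i≥h} Δ_i(x)·2^{i/2}, where Δ_i(x) = sup_{x' ≻ p_i(x)} d(x', p_i(x)) is the d-radius of the cell at depth i containing x. -/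
open MeasureTheory ProbabilityTheory Real
open scoped NNReal ENNReal

noncomputable section AuxOuter
section Aux

open Set Filter
open scoped NNReal ENNReal

lemma aux_integrableOn_sq_mul_exp_neg_mul_sq {b : ℝ} (hb : 0 < b) :
    IntegrableOn (fun x : ℝ => x ^ 2 * Real.exp (-b * x ^ 2)) (Ioi 0) := by
  have := integrableOn_rpow_mul_exp_neg_mul_sq hb (s := 2) (by norm_num)
  refine this.congr_fun (fun x hx => ?_) measurableSet_Ioi
  beta_reduce
  rw [show ((2:ℝ) = ((2:ℕ):ℝ)) by norm_num, Real.rpow_natCast]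

lemma aux_integral_Ioi_sq_mul_exp_neg_mul_sq {b : ℝ} (hb : 0 < b) :
    ∫ x in Ioi (0:ℝ), x ^ 2 * Real.exp (-b * x ^ 2) = √(π / b) / (4 * b) := by
  have hF : ∀ x : ℝ, HasDerivAt (fun y : ℝ => -y / (2 * b) * Real.exp (-b * y ^ 2))
      (x ^ 2 * Real.exp (-b * x ^ 2) - (2 * b)⁻¹ * Real.exp (-b * x ^ 2)) x := by
    intro x
    have h1 : HasDerivAt (fun y : ℝ => -y / (2 * b)) (-(2 * b)⁻¹) x := by
      simpa [neg_div, div_eq_mul_inv] using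
        ((hasDerivAt_id x).neg.mul_const (2 * b)⁻¹)
    have h2 : HasDerivAt (fun y : ℝ => Real.exp (-b * y ^ 2))
        (Real.exp (-b * x ^ 2) * (-b * (2 * x))) x := by
      have : HasDerivAt (fun y : ℝ => -b * y ^ 2) (-b * (2 * x)) x := by
        simpa using ((hasDerivAt_pow 2 x).const_mul (-b))
      exact this.exp
    have : HasDerivAt (fun y : ℝ => -y / (2 * b) * Real.exp (-b * y ^ 2)) _ x := h1.mul h2
    convert this using 1
    field_simp
    ring
  have hint : IntegrableOn (fun x : ℝ =>
      x ^ 2 * Real.exp (-b * x ^ 2) - (2 * b)⁻¹ * Real.exp (-b * x ^ 2)) (Ioi 0) := by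
    exact (aux_integrableOn_sq_mul_exp_neg_mul_sq hb).sub
      (((integrable_exp_neg_mul_sq hb).const_mul _).integrableOn)
  have htend : Tendsto (fun y : ℝ => -y / (2 * b) * Real.exp (-b * y ^ 2)) atTop (nhds 0) := by
    have h0 : (fun x : ℝ => x ^ (1:ℝ) * Real.exp (-b * x ^ 2)) =o[atTop]
        fun x => Real.exp (-(1/2) * x) :=
      rpow_mul_exp_neg_mul_sq_isLittleO_exp_neg hb 1
    have h1 : Tendsto (fun x : ℝ => x ^ (1:ℝ) * Real.exp (-b * x ^ 2)) atTop (nhds 0) :=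
      h0.tendsto_zero_of_tendsto (tendsto_exp_atBot.comp
        (by exact (tendsto_id.const_mul_atTop_of_neg (by norm_num : (-(1/2):ℝ) < 0))))
    have h2 : Tendsto (fun x : ℝ => -(2*b)⁻¹ * (x ^ (1:ℝ) * Real.exp (-b * x ^ 2)))
        atTop (nhds 0) := by
      simpa using h1.const_mul (-(2*b)⁻¹)
    refine h2.congr' ?_
    filter_upwards [eventually_gt_atTop (0:ℝ)] with x hx
    rw [Real.rpow_one]
    ring
  have key := integral_Ioi_of_hasDerivAt_of_tendsto' (fun x _ => hF x) hint (by simpa using htend)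
  have key2 : ∫ x in Ioi (0:ℝ),
      (x ^ 2 * Real.exp (-b * x ^ 2) - (2 * b)⁻¹ * Real.exp (-b * x ^ 2)) = 0 := by
    simpa using key
  rw [integral_sub (aux_integrableOn_sq_mul_exp_neg_mul_sq hb)
    (((integrable_exp_neg_mul_sq hb).const_mul _).integrableOn), sub_eq_zero] at key2
  rw [key2, MeasureTheory.integral_const_mul, integral_gaussian_Ioi]
  rw [eq_div_iff (by positivity)]
  field_simp
  ring

lemma aux_integral_sq_gaussianReal (v : ℝ≥0) : ∫ x, x ^ 2 ∂(gaussianReal 0 v) = v := by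
  by_cases hv : v = 0
  · subst hv; simp [gaussianReal_zero_var]
  have hv' : 0 < (v:ℝ) := by positivity
  set b : ℝ := (2 * (v:ℝ))⁻¹ with hb
  have hbpos : 0 < b := by positivity
  have hpdf : gaussianPDF 0 v = fun x => ((Real.toNNReal (gaussianPDFReal 0 v x) : ℝ≥0) : ℝ≥0∞) :=
    rfl
  rw [gaussianReal_of_var_ne_zero _ hv, hpdf,
    integral_withDensity_eq_integral_smul ((measurable_gaussianPDFReal 0 v).real_toNNReal) _]
  have h1 : ∀ x : ℝ, (Real.toNNReal (gaussianPDFReal 0 v x) : ℝ≥0) • x ^ 2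
      = (√(2*π*v))⁻¹ * (x ^ 2 * Real.exp (-b * x ^ 2)) := by
    intro x
    rw [NNReal.smul_def, Real.coe_toNNReal _ (gaussianPDFReal_nonneg _ _ _), gaussianPDFReal]
    have : -(x - 0)^2/(2*(v:ℝ)) = -b * x ^ 2 := by
      rw [hb]; field_simp; simp
    rw [this, smul_eq_mul]; ring
  simp_rw [h1]
  rw [MeasureTheory.integral_const_mul]
  have heven : ∫ x : ℝ, x ^ 2 * Real.exp (-b * x ^ 2)
      = 2 * ∫ x in Ioi (0:ℝ), x ^ 2 * Real.exp (-b * x ^ 2) := by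
    rw [← integral_comp_abs (f := fun t => t ^ 2 * Real.exp (-b * t ^ 2))]
    simp [sq_abs]
  rw [heven, aux_integral_Ioi_sq_mul_exp_neg_mul_sq hbpos]
  have hπb : π / b = 2 * π * v := by rw [hb]; field_simp
  have h4b : (4 : ℝ) * b = 2 / v := by rw [hb]; field_simp; ring
  rw [hπb, h4b]
  have hs : (0:ℝ) < √(2*π*v) := Real.sqrt_pos.mpr (by positivity)
  field_simp

lemma aux_gaussianReal_tail (v : ℝ≥0) (hv : v ≠ 0) {l : ℝ} (hl : 0 ≤ l) :
    gaussianReal 0 v {x | l < x} ≤ ENNReal.ofReal (Real.exp (-l^2 / (2*v))) := by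
  have hIoi : {x : ℝ | l < x} = Ioi l := rfl
  rw [gaussianReal_apply 0 hv, hIoi]
  have h2v : 0 < 2*(v:ℝ) := by positivity
  have hpt : ∀ x ∈ Ioi l, gaussianPDF 0 v x
      ≤ ENNReal.ofReal (Real.exp (-l^2/(2*v))) * gaussianPDF l v x := by
    intro x hx
    rw [gaussianPDF, gaussianPDF, ← ENNReal.ofReal_mul (Real.exp_pos _).le]
    apply ENNReal.ofReal_le_ofReal
    rw [gaussianPDFReal, gaussianPDFReal, sub_zero]
    have hC : (0:ℝ) ≤ (√(2*π*v))⁻¹ := by positivity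
    have hexp : Real.exp (-x^2/(2*(v:ℝ)))
        ≤ Real.exp (-l^2/(2*(v:ℝ))) * Real.exp (-(x-l)^2/(2*(v:ℝ))) := by
      rw [← Real.exp_add, ← add_div]
      apply Real.exp_le_exp.mpr
      apply (div_le_div_iff_of_pos_right h2v).mpr
      have hx' : l < x := hx
      nlinarith [mul_nonneg hl (sub_nonneg.mpr hx'.le)]
    calc (√(2*π*v))⁻¹ * Real.exp (-x^2/(2*(v:ℝ)))
        ≤ (√(2*π*v))⁻¹ * (Real.exp (-l^2/(2*(v:ℝ))) * Real.exp (-(x-l)^2/(2*(v:ℝ)))) :=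
          mul_le_mul_of_nonneg_left hexp hC
      _ = Real.exp (-l^2/(2*(v:ℝ))) * ((√(2*π*v))⁻¹ * Real.exp (-(x-l)^2/(2*(v:ℝ)))) := by ring
  calc ∫⁻ x in Ioi l, gaussianPDF 0 v x
      ≤ ∫⁻ x in Ioi l, ENNReal.ofReal (Real.exp (-l^2/(2*v))) * gaussianPDF l v x :=
        setLIntegral_mono (by exact (measurable_gaussianPDF l v).const_mul _) hpt
    _ = ENNReal.ofReal (Real.exp (-l^2/(2*v))) * ∫⁻ x in Ioi l, gaussianPDF l v x :=
        lintegral_const_mul _ (measurable_gaussianPDF l v)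
    _ ≤ ENNReal.ofReal (Real.exp (-l^2/(2*v))) * 1 := by
        gcongr
        rw [← lintegral_gaussianPDF_eq_one l hv]
        exact setLIntegral_le_lintegral _ _
    _ = ENNReal.ofReal (Real.exp (-l^2/(2*v))) := mul_one _

end Aux
end AuxOuter

noncomputable section

/-- The canonical pseudo-metric `d(x,y) = (E[(f(x) - f(y))²])^{1/2}` of the process `f`. -/
def gpDist {Ω X : Type*} [MeasurableSpace Ω] (P : Measure Ω) (f : Ω → X → ℝ)
    (x y : X) : ℝ :=
  Real.sqrt (∫ ω, (f ω x - f ω y) ^ 2 ∂P)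

universe v w

set_option maxHeartbeats 2000000 in
/-- **Generic chaining upper bound for Gaussian processes with geometric weights
`n_i = 2^i`.** For every `u > 0` and `a > 1` there is a constant `c_u > 0`, depending only
on `u` and `a`, such that for every centered Gaussian vector `f` indexed by a finite set `X`
and every tree `T` exhausting `X` with `|T_0| = 1` and `|T_h| ≤ e^{2^h}` for `h ≥ 1`, with
probability at least `1 - e^{-u}`: for all `h ≥ 0` and all `s ∈ T_h`,
`sup_{x ≻ s} f(x) - f(s) ≤ c_u sup_{x ≻ s} ∑_{i ≥ h} Δ_i(x) 2^{i/2}`. -/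
theorem statement5 (u a : ℝ) (hu : 0 < u) (ha : 1 < a) :
    ∃ cu : ℝ, 0 < cu ∧
      ∀ (Ω : Type v) (_ : MeasurableSpace Ω) (P : Measure Ω) (_ : IsProbabilityMeasure P)
        (X : Type w) (_ : Fintype X) (_ : Nonempty X)
        (f : Ω → X → ℝ), Measurable f →
        -- `f` is a centered Gaussian vector indexed by `X`
        (∀ cvec : X → ℝ, ∃ vr : NNReal,
          Measure.map (fun ω => ∑ x : X, cvec x * f ω x) P = gaussianReal 0 vr) →
        ∀ T : ChainTree X,
        (T.level 0).card = 1 →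
        (∀ h : ℕ, 1 ≤ h → ((T.level h).card : ℝ) ≤ Real.exp (2 ^ h)) →
        P {ω | ∀ h : ℕ, ∀ s ∈ T.level h, ∀ x : X, T.anc h x = s →
            f ω x - f ω s ≤ cu * sSup {v : ℝ | ∃ x' : X, T.anc h x' = s ∧
              v = ∑ i ∈ Finset.Icc h T.h0,
                cellRadius T (gpDist P f) i x' * 2 ^ ((i : ℝ) / 2)}}
          ≥ ENNReal.ofReal (1 - Real.exp (-u)) := by
  classical
  refine ⟨2 * Real.sqrt (u + 3), by positivity, ?_⟩
  intro Ω mΩ P hP X hX hne f hf hgauss T hcard0 hcard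
  set c : ℝ := Real.sqrt (2 * u + 6) with hc
  have hcpos : 0 < c := by rw [hc]; positivity
  have hcsq : c ^ 2 = 2 * u + 6 := Real.sq_sqrt (by linarith)
  have hcu : 2 * Real.sqrt (u + 3) = Real.sqrt 2 * c := by
    rw [hc, ← Real.sqrt_mul (by norm_num : (0:ℝ) ≤ 2)]
    rw [show (2:ℝ) * Real.sqrt (u+3) = Real.sqrt 4 * Real.sqrt (u+3) by
      rw [show (4:ℝ) = 2^2 by norm_num, Real.sqrt_sq (by norm_num : (0:ℝ) ≤ 2)]]
    rw [← Real.sqrt_mul (by norm_num : (0:ℝ) ≤ 4)]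
    congr 1
    ring
  set d : X → X → ℝ := gpDist P f with hd
  have hfx : ∀ t : X, Measurable fun ω => f ω t := fun t => (measurable_pi_apply t).comp hf
  have hg : ∀ t s : X, Measurable fun ω => f ω t - f ω s := fun t s => (hfx t).sub (hfx s)
  have hd_nonneg : ∀ y z : X, 0 ≤ d y z := fun y z => Real.sqrt_nonneg _
  have hd_self : ∀ y : X, d y y = 0 := by
    intro y; rw [hd]; simp [gpDist]
  have hbdd : ∀ (g : X → ℝ) (p : X → Prop), BddAbove {v : ℝ | ∃ x', p x' ∧ v = g x'} := by
    intro g p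
    apply Set.Finite.bddAbove
    apply Set.Finite.subset (Set.finite_range g)
    rintro v ⟨x', _, rfl⟩
    exact ⟨x', rfl⟩
  have hcell_nonneg : ∀ (i : ℕ) (x' : X), 0 ≤ cellRadius T d i x' := by
    intro i x'
    apply le_csSup (hbdd _ _)
    exact ⟨T.anc i x', T.anc_anc i i x' le_rfl, (hd_self _).symm⟩
  have hcell_le : ∀ (i : ℕ) (x t : X), T.anc i t = T.anc i x → d t (T.anc i x) ≤ cellRadius T d i x := by
    intro i x t ht
    exact le_csSup (hbdd _ _) ⟨t, ht, rfl⟩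
  -- Gaussian increments
  have hinc : ∀ t s : X, ∃ vr : NNReal,
      Measure.map (fun ω => f ω t - f ω s) P = gaussianReal 0 vr ∧ d t s ^ 2 = vr := by
    intro t s
    set cvec : X → ℝ := fun y => (if y = t then 1 else 0) - (if y = s then 1 else 0) with hcvec
    obtain ⟨vr, hvr⟩ := hgauss cvec
    have hsum : (fun ω => ∑ y : X, cvec y * f ω y) = fun ω => f ω t - f ω s := by
      funext ω
      simp only [hcvec, sub_mul, ite_mul, one_mul, zero_mul, Finset.sum_sub_distrib,
        Finset.sum_ite_eq', Finset.mem_univ, if_true]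
    rw [hsum] at hvr
    refine ⟨vr, hvr, ?_⟩
    have h1 : ∫ y, y^2 ∂(gaussianReal 0 vr) = ∫ ω, (f ω t - f ω s)^2 ∂P := by
      rw [← hvr]
      exact integral_map (hg t s).aemeasurable (measurable_id.pow_const 2).aestronglyMeasurable
    have h2 : d t s = Real.sqrt (∫ ω, (f ω t - f ω s)^2 ∂P) := rfl
    rw [h2, ← h1, aux_integral_sq_gaussianReal, Real.sq_sqrt vr.coe_nonneg]
  -- tail bound
  have htail : ∀ (t s : X) (r : ℝ), 0 ≤ r →
      P {ω | c * r * d t s < f ω t - f ω s} ≤ ENNReal.ofReal (Real.exp (-(u + 3) * r^2)) := by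
    intro t s r hr
    obtain ⟨vr, hmap, hdv⟩ := hinc t s
    have hpre : {ω | c * r * d t s < f ω t - f ω s}
        = (fun ω => f ω t - f ω s) ⁻¹' {y | c * r * d t s < y} := rfl
    have hms : MeasurableSet {y : ℝ | c * r * d t s < y} := measurableSet_Ioi
    rw [hpre, ← Measure.map_apply (hg t s) hms, hmap]
    by_cases hvr : vr = 0
    · have hd0 : d t s = 0 := by
        rw [hvr] at hdv
        norm_num at hdv
        exact hdv
      rw [hvr, gaussianReal_zero_var, hd0, mul_zero]
      rw [show {y:ℝ | 0 < y} = Set.Ioi 0 from rfl, Measure.dirac_apply' _ measurableSet_Ioi]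
      simp
    · have hds : d t s = Real.sqrt vr := by
        rw [← Real.sqrt_sq (hd_nonneg t s), hdv]
      have hl : 0 ≤ c * r * d t s := mul_nonneg (mul_nonneg hcpos.le hr) (hd_nonneg t s)
      refine (aux_gaussianReal_tail vr hvr hl).trans ?_
      apply ENNReal.ofReal_le_ofReal
      apply Real.exp_le_exp.mpr
      have hveq : (c * r * d t s)^2 = c^2 * r^2 * vr := by
        rw [hds, mul_pow, mul_pow, Real.sq_sqrt vr.coe_nonneg]
      rw [hveq, hcsq]
      have hvpos : 0 < (vr:ℝ) := NNReal.coe_pos.mpr (pos_iff_ne_zero.mpr hvr)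
      exact le_of_eq (by field_simp; ring)
  -- the bad event
  set B : ℕ → X → Set Ω := fun i t =>
    {ω | c * 2 ^ (((i:ℝ)+1)/2) * d t (T.anc i t) < f ω t - f ω (T.anc i t)} with hB
  set Bad : Set Ω := ⋃ i ∈ Finset.range T.h0, ⋃ t ∈ T.level (i+1), B i t with hBad
  have hBmeas : ∀ i t, MeasurableSet (B i t) := by
    intro i t
    exact (hg t (T.anc i t)) measurableSet_Ioi
  have hBadMeas : MeasurableSet Bad := by
    apply Set.Finite.measurableSet_biUnion (Finset.range T.h0).finite_toSet
    intro i _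
    exact Set.Finite.measurableSet_biUnion (T.level (i+1)).finite_toSet fun t _ => hBmeas i t
  -- probability of the bad event
  have hPB : ∀ i t, P (B i t) ≤ ENNReal.ofReal (Real.exp (-(u + 3) * 2 ^ ((i:ℝ)+1))) := by
    intro i t
    have hr : (0:ℝ) ≤ 2 ^ (((i:ℝ)+1)/2) := le_of_lt (Real.rpow_pos_of_pos two_pos _)
    have := htail t (T.anc i t) (2 ^ (((i:ℝ)+1)/2)) hr
    have hsq : ((2:ℝ) ^ (((i:ℝ)+1)/2))^2 = 2 ^ ((i:ℝ)+1) := by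
      rw [← Real.rpow_natCast ((2:ℝ) ^ (((i:ℝ)+1)/2)) 2, ← Real.rpow_mul (by norm_num)]
      norm_num
    rw [hsq] at this
    exact this
  have hPBad : P Bad ≤ ENNReal.ofReal (Real.exp (-u)) := by
    have step1 : P Bad ≤ ∑ i ∈ Finset.range T.h0, ∑ t ∈ T.level (i+1), P (B i t) := by
      refine (measure_biUnion_finset_le _ _).trans ?_
      exact Finset.sum_le_sum fun i _ => measure_biUnion_finset_le _ _
    have step2 : ∀ i : ℕ, ∑ t ∈ T.level (i+1), P (B i t)
        ≤ ENNReal.ofReal (Real.exp (-(u+2+(i:ℝ)))) := by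
      intro i
      have hEi : ((i:ℝ)+2) ≤ (2:ℝ) ^ ((i:ℝ)+1) := by
        have h1 : (i+2 : ℕ) ≤ 2 ^ (i+1) := Nat.succ_le_of_lt (Nat.lt_two_pow_self)
        have h2 : ((i:ℝ)+1) = ((i+1 : ℕ) : ℝ) := by push_cast; ring
        rw [h2, Real.rpow_natCast]
        exact_mod_cast h1
      calc ∑ t ∈ T.level (i+1), P (B i t)
          ≤ (T.level (i+1)).card • ENNReal.ofReal (Real.exp (-(u + 3) * 2 ^ ((i:ℝ)+1))) :=
            Finset.sum_le_card_nsmul _ _ _ fun t _ => hPB i t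
        _ = ((T.level (i+1)).card : ℝ≥0∞) * ENNReal.ofReal (Real.exp (-(u + 3) * 2 ^ ((i:ℝ)+1))) :=
            nsmul_eq_mul _ _
        _ = ENNReal.ofReal (((T.level (i+1)).card : ℝ) * Real.exp (-(u+3) * 2 ^ ((i:ℝ)+1))) := by
            rw [← ENNReal.ofReal_natCast, ← ENNReal.ofReal_mul (Nat.cast_nonneg _)]
        _ ≤ ENNReal.ofReal (Real.exp (-(u+2+(i:ℝ)))) := by
            apply ENNReal.ofReal_le_ofReal
            have hcardi : ((T.level (i+1)).card : ℝ) ≤ Real.exp ((2:ℝ) ^ (i+1)) :=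
              hcard (i+1) (by omega)
            have h2 : ((2:ℝ) ^ ((i:ℝ)+1)) = (2:ℝ) ^ (i+1) := by
              have h3 : ((i:ℝ)+1) = ((i+1 : ℕ) : ℝ) := by push_cast; ring
              rw [h3, Real.rpow_natCast]
            calc ((T.level (i+1)).card : ℝ) * Real.exp (-(u+3) * 2 ^ ((i:ℝ)+1))
                ≤ Real.exp ((2:ℝ) ^ ((i:ℝ)+1)) * Real.exp (-(u+3) * 2 ^ ((i:ℝ)+1)) := by
                  apply mul_le_mul_of_nonneg_right _ (Real.exp_pos _).le
                  rw [h2]; exact hcardi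
              _ = Real.exp ((2:ℝ) ^ ((i:ℝ)+1) + (-(u+3) * 2 ^ ((i:ℝ)+1))) := (Real.exp_add _ _).symm
              _ ≤ Real.exp (-(u+2+(i:ℝ))) := by
                  apply Real.exp_le_exp.mpr
                  nlinarith [hEi, hu, Real.rpow_pos_of_pos two_pos ((i:ℝ)+1)]
    have hexp1 : Real.exp (-1) ≤ 1/2 := by
      have h2e : (2:ℝ) ≤ Real.exp 1 := by
        have := Real.add_one_le_exp 1; linarith
      rw [Real.exp_neg, show (1:ℝ)/2 = 2⁻¹ by norm_num]
      exact inv_anti₀ (by norm_num) h2e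
    have hreal : ∑ i ∈ Finset.range T.h0, Real.exp (-(u+2+(i:ℝ))) ≤ Real.exp (-u) := by
      calc ∑ i ∈ Finset.range T.h0, Real.exp (-(u+2+(i:ℝ)))
          ≤ ∑ i ∈ Finset.range T.h0, Real.exp (-(u+2)) * (1/2 : ℝ)^i := by
            apply Finset.sum_le_sum
            intro i _
            rw [show -(u+2+(i:ℝ)) = -(u+2) + (i:ℝ) * (-1) by ring, Real.exp_add,
              Real.exp_nat_mul]
            exact mul_le_mul_of_nonneg_left
              (pow_le_pow_left₀ (Real.exp_pos _).le hexp1 i) (Real.exp_pos _).le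
        _ = Real.exp (-(u+2)) * ∑ i ∈ Finset.range T.h0, (1/2 : ℝ)^i := by
            rw [Finset.mul_sum]
        _ ≤ Real.exp (-(u+2)) * 2 :=
            mul_le_mul_of_nonneg_left (sum_geometric_two_le _) (Real.exp_pos _).le
        _ ≤ Real.exp (-u) := by
            rw [show -(u+2) = -u + (-2) by ring, Real.exp_add]
            have hexp2 : Real.exp (-2) ≤ 1/2 :=
              le_trans (Real.exp_le_exp.mpr (by norm_num)) hexp1
            nlinarith [Real.exp_pos (-u)]
    calc P Bad ≤ ∑ i ∈ Finset.range T.h0, ∑ t ∈ T.level (i+1), P (B i t) := step1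
      _ ≤ ∑ i ∈ Finset.range T.h0, ENNReal.ofReal (Real.exp (-(u+2+(i:ℝ)))) :=
          Finset.sum_le_sum fun i _ => step2 i
      _ = ENNReal.ofReal (∑ i ∈ Finset.range T.h0, Real.exp (-(u+2+(i:ℝ)))) :=
          (ENNReal.ofReal_sum_of_nonneg fun i _ => (Real.exp_pos _).le).symm
      _ ≤ ENNReal.ofReal (Real.exp (-u)) := ENNReal.ofReal_le_ofReal hreal
  -- from bad to the statement
  have hgoodset : Badᶜ ⊆ {ω | ∀ h : ℕ, ∀ s ∈ T.level h, ∀ x : X, T.anc h x = s →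
            f ω x - f ω s ≤ (2 * Real.sqrt (u + 3)) * sSup {v : ℝ | ∃ x' : X, T.anc h x' = s ∧
              v = ∑ i ∈ Finset.Icc h T.h0,
                cellRadius T (gpDist P f) i x' * 2 ^ ((i : ℝ) / 2)}} := by
    intro ω hω
    intro h s hs x hx
    have hgood : ∀ i, i < T.h0 → ∀ t ∈ T.level (i+1),
        f ω t - f ω (T.anc i t) ≤ c * 2 ^ (((i:ℝ)+1)/2) * d t (T.anc i t) := by
      intro i hi t ht
      by_contra hcon
      push_neg at hcon
      exact hω (Set.mem_iUnion₂.mpr ⟨i, Finset.mem_range.mpr hi,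
        Set.mem_iUnion₂.mpr ⟨t, ht, hcon⟩⟩)
    have key : f ω x - f ω s
        = ∑ i ∈ Finset.Ico h T.h0, (f ω (T.anc (i+1) x) - f ω (T.anc i x)) := by
      rcases le_or_gt h T.h0 with hh | hh
      · rw [Finset.sum_Ico_eq_sum_range]
        have htel := Finset.sum_range_sub (f := fun j => f ω (T.anc (h + j) x)) (T.h0 - h)
        simp only [Nat.add_zero] at htel
        rw [Nat.add_sub_cancel' hh] at htel
        rw [show (∑ i ∈ Finset.range (T.h0 - h),
            (f ω (T.anc (h + i + 1) x) - f ω (T.anc (h + i) x)))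
          = ∑ i ∈ Finset.range (T.h0 - h),
            (f ω (T.anc (h + (i + 1)) x) - f ω (T.anc (h + i) x)) by
          apply Finset.sum_congr rfl; intro j _; rw [Nat.add_assoc]]
        rw [htel, T.anc_deep T.h0 x le_rfl, hx]
      · rw [Finset.Ico_eq_empty (by omega), Finset.sum_empty]
        have hxx : T.anc h x = x := T.anc_deep h x hh.le
        rw [← hx, hxx, sub_self]
    have hterm : ∀ i ∈ Finset.Ico h T.h0, f ω (T.anc (i+1) x) - f ω (T.anc i x)
        ≤ (Real.sqrt 2 * c) * (cellRadius T d i x * 2 ^ ((i:ℝ)/2)) := by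
      intro i hi
      obtain ⟨hi1, hi2⟩ := Finset.mem_Ico.mp hi
      have hanc : T.anc i (T.anc (i+1) x) = T.anc i x := T.anc_anc i (i+1) x (by omega)
      have h1 := hgood i hi2 (T.anc (i+1) x) (T.anc_mem (i+1) x)
      rw [hanc] at h1
      have h2 : d (T.anc (i+1) x) (T.anc i x) ≤ cellRadius T d i x := hcell_le i x _ hanc
      have h3 : (0:ℝ) < 2 ^ (((i:ℝ)+1)/2) := Real.rpow_pos_of_pos two_pos _
      have h4 : (2:ℝ) ^ (((i:ℝ)+1)/2) = Real.sqrt 2 * 2 ^ ((i:ℝ)/2) := by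
        rw [Real.sqrt_eq_rpow, ← Real.rpow_add two_pos]
        congr 1
        ring
      calc f ω (T.anc (i+1) x) - f ω (T.anc i x)
          ≤ c * 2 ^ (((i:ℝ)+1)/2) * d (T.anc (i+1) x) (T.anc i x) := h1
        _ ≤ c * 2 ^ (((i:ℝ)+1)/2) * cellRadius T d i x := by
            apply mul_le_mul_of_nonneg_left h2 (by positivity)
        _ = (Real.sqrt 2 * c) * (cellRadius T d i x * 2 ^ ((i:ℝ)/2)) := by
            rw [h4]; ring
    have hsum : f ω x - f ω s
        ≤ (Real.sqrt 2 * c) * ∑ i ∈ Finset.Ico h T.h0, cellRadius T d i x * 2 ^ ((i:ℝ)/2) := by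
      rw [key, Finset.mul_sum]
      exact Finset.sum_le_sum hterm
    have hsum2 : ∑ i ∈ Finset.Ico h T.h0, cellRadius T d i x * 2 ^ ((i:ℝ)/2)
        ≤ ∑ i ∈ Finset.Icc h T.h0, cellRadius T d i x * 2 ^ ((i:ℝ)/2) := by
      apply Finset.sum_le_sum_of_subset_of_nonneg Finset.Ico_subset_Icc_self
      intro i _ _
      exact mul_nonneg (hcell_nonneg i x) (le_of_lt (Real.rpow_pos_of_pos two_pos _))
    have hle : (∑ i ∈ Finset.Icc h T.h0, cellRadius T d i x * 2 ^ ((i:ℝ)/2))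
        ≤ sSup {v : ℝ | ∃ x' : X, T.anc h x' = s ∧
            v = ∑ i ∈ Finset.Icc h T.h0, cellRadius T d i x' * 2 ^ ((i:ℝ)/2)} :=
      le_csSup (hbdd _ _) ⟨x, hx, rfl⟩
    rw [hcu]
    have hfac : (0:ℝ) ≤ Real.sqrt 2 * c := by positivity
    calc f ω x - f ω s
        ≤ (Real.sqrt 2 * c) * ∑ i ∈ Finset.Ico h T.h0, cellRadius T d i x * 2 ^ ((i:ℝ)/2) := hsum
      _ ≤ (Real.sqrt 2 * c) * ∑ i ∈ Finset.Icc h T.h0, cellRadius T d i x * 2 ^ ((i:ℝ)/2) :=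
          mul_le_mul_of_nonneg_left hsum2 hfac
      _ ≤ _ := mul_le_mul_of_nonneg_left hle hfac
  calc ENNReal.ofReal (1 - Real.exp (-u))
      = 1 - ENNReal.ofReal (Real.exp (-u)) := by
        rw [ENNReal.ofReal_sub _ (Real.exp_pos _).le, ENNReal.ofReal_one]
    _ ≤ 1 - P Bad := tsub_le_tsub_left hPBad 1
    _ = P Badᶜ := (prob_compl_eq_one_sub hBadMeas).symm
    _ ≤ _ := measure_mono hgoodset



end
end

section
/- Let N_1, …, N_m be m independent standard normal random variables and let u > 0. If m ≥ 2.6·u, then with probability at least 1 − e^{−u}, max_{i≤m} N_i ≥ √(log(m/(2.6·u))). -/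
open MeasureTheory ProbabilityTheory Real

open Set Filter
open scoped ENNReal NNReal


lemma exp_neg_le_quad {y : ℝ} (hy : 0 ≤ y) : Real.exp (-y) ≤ 1 - y + y^2/2 := by
  have hP : 1 + y + y^2/2 + y^3/6 ≤ Real.exp y := by
    have h := Real.sum_le_exp_of_nonneg hy 4
    simp [Finset.sum_range_succ, Nat.factorial] at h
    linarith
  have hpos : (0:ℝ) < 1 - y + y^2/2 := by nlinarith [sq_nonneg (y-1)]
  have h3 : 1 ≤ (1 - y + y^2/2) * Real.exp y := by
    have h2 : 1 ≤ (1 - y + y^2/2) * (1 + y + y^2/2 + y^3/6) := by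
      nlinarith [pow_nonneg hy 3, pow_nonneg hy 4, pow_nonneg hy 5]
    exact h2.trans (mul_le_mul_of_nonneg_left hP hpos.le)
  rw [Real.exp_neg, inv_eq_one_div, div_le_iff₀ (Real.exp_pos y)]
  linarith

lemma exp_neg_le_quart {y : ℝ} (hy : 0 ≤ y) :
    Real.exp (-y) ≤ 1 - y + y^2/2 - y^3/6 + y^4/24 := by
  have hP : 1 + y + y^2/2 + y^3/6 + y^4/24 ≤ Real.exp y := by
    have h := Real.sum_le_exp_of_nonneg hy 5
    simp [Finset.sum_range_succ, Nat.factorial] at h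
    linarith
  have hPpos : (0:ℝ) < 1 + y + y^2/2 + y^3/6 + y^4/24 := by positivity
  have h2 : 1 ≤ (1 - y + y^2/2 - y^3/6 + y^4/24) * (1 + y + y^2/2 + y^3/6 + y^4/24) := by
    nlinarith [pow_nonneg hy 6, pow_nonneg hy 8]
  have hpos : (0:ℝ) < 1 - y + y^2/2 - y^3/6 + y^4/24 := by
    by_contra h
    push_neg at h
    nlinarith [pow_nonneg hy 6, pow_nonneg hy 8]
  have h3 : 1 ≤ (1 - y + y^2/2 - y^3/6 + y^4/24) * Real.exp y :=
    h2.trans (mul_le_mul_of_nonneg_left hP hpos.le)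
  rw [Real.exp_neg, inv_eq_one_div, div_le_iff₀ (Real.exp_pos y)]
  linarith

lemma exp_cube_le {y : ℝ} (hy : 0 ≤ y) : 1 + y + y^2/2 + y^3/6 ≤ Real.exp y := by
  have h := Real.sum_le_exp_of_nonneg hy 4
  simp [Finset.sum_range_succ, Nat.factorial] at h
  linarith

lemma gauss_integrable : Integrable (fun x : ℝ => Real.exp (-x^2/2)) := by
  have : (fun x : ℝ => Real.exp (-x^2/2)) = fun x : ℝ => Real.exp (-(1/2) * x^2) := by
    funext x; ring_nf
  rw [this]
  exact integrable_exp_neg_mul_sq (by norm_num)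

lemma gauss_Ioi_zero : ∫ x in Ioi (0:ℝ), Real.exp (-x^2/2) = Real.sqrt (2*π) / 2 := by
  have h := integral_gaussian_Ioi (1/2)
  have e : (fun x : ℝ => Real.exp (-(1/2) * x^2)) = fun x : ℝ => Real.exp (-x^2/2) := by
    funext x; ring_nf
  rw [e] at h
  rw [h]
  norm_num [div_div_eq_mul_div]
  ring

lemma gauss_split {t : ℝ} (ht : 0 ≤ t) :
    ∫ x in Ioi t, Real.exp (-x^2/2)
      = Real.sqrt (2*π)/2 - ∫ x in Ioc 0 t, Real.exp (-x^2/2) := by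
  have hu : Ioc (0:ℝ) t ∪ Ioi t = Ioi 0 := Ioc_union_Ioi_eq_Ioi ht
  have hd : Disjoint (Ioc (0:ℝ) t) (Ioi t) := Ioc_disjoint_Ioi le_rfl
  have := setIntegral_union hd measurableSet_Ioi
    (gauss_integrable.integrableOn (s := Ioc 0 t)) (gauss_integrable.integrableOn (s := Ioi t))
  rw [hu] at this
  rw [gauss_Ioi_zero] at this
  linarith

lemma gauss_Ioc_le {t : ℝ} (ht : 0 ≤ t) :
    ∫ x in Ioc 0 t, Real.exp (-x^2/2) ≤ t - t^3/6 + t^5/40 := by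
  have h1 : ∫ x in Ioc 0 t, Real.exp (-x^2/2) = ∫ x in (0:ℝ)..t, Real.exp (-x^2/2) := by
    rw [intervalIntegral.integral_of_le ht]
  rw [h1]
  have h2 : ∫ x in (0:ℝ)..t, (1 - x^2/2 + x^4/8) = t - t^3/6 + t^5/40 := by
    rw [intervalIntegral.integral_add, intervalIntegral.integral_sub, intervalIntegral.integral_div,
      intervalIntegral.integral_div]
    · simp [integral_pow]; ring
    · exact intervalIntegrable_const
    · exact (intervalIntegral.intervalIntegrable_pow 2).div_const 2
    · exact intervalIntegrable_const.sub ((intervalIntegral.intervalIntegrable_pow 2).div_const 2)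
    · exact (intervalIntegral.intervalIntegrable_pow 4).div_const 8
  rw [← h2]
  apply intervalIntegral.integral_mono_on ht
  · exact gauss_integrable.intervalIntegrable
  · apply IntervalIntegrable.add
    · apply IntervalIntegrable.sub intervalIntegrable_const
      exact (intervalIntegral.intervalIntegrable_pow 2).div_const 2
    · exact (intervalIntegral.intervalIntegrable_pow 4).div_const 8
  · intro x hx
    have hx2 : 0 ≤ x^2/2 := by positivity
    have := exp_neg_le_quad hx2
    calc Real.exp (-x^2/2) = Real.exp (-(x^2/2)) := by ring_nf
      _ ≤ 1 - x^2/2 + (x^2/2)^2/2 := this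
      _ = 1 - x^2/2 + x^4/8 := by ring

lemma gauss_tail_deriv {x : ℝ} (hx : 0 < x) :
    HasDerivAt (fun y => -Real.exp (-y^2/2) / y)
      (Real.exp (-x^2/2) * (1 + x⁻¹^2)) x := by
  have h1 : HasDerivAt (fun y : ℝ => -y^2/2) (-x) x := by
    have := ((hasDerivAt_pow 2 x).div_const 2).fun_neg
    rw [show (fun y : ℝ => -y^2/2) = fun i => -(i^2/2) by funext y; ring]
    refine this.congr_deriv ?_
    norm_num
  have h2 := h1.exp
  have h3 := h2.neg.div (hasDerivAt_id x) (ne_of_gt hx)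
  refine (h3.congr_deriv ?_).congr_of_eventuallyEq (Filter.Eventually.of_forall fun y => ?_)
  · simp only [id, Pi.neg_apply]
    field_simp
    ring
  · simp

lemma gauss_tail_integrable {t : ℝ} (ht : 1 ≤ t) :
    IntegrableOn (fun x => Real.exp (-x^2/2) * (1 + x⁻¹^2)) (Ioi t) := by
  have ht0 : 0 < t := lt_of_lt_of_le one_pos ht
  apply Integrable.mono ((gauss_integrable.const_mul 2).integrableOn (s := Ioi t))
  · apply ContinuousOn.aestronglyMeasurable _ measurableSet_Ioi
    apply ContinuousOn.mul (Continuous.continuousOn (by continuity))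
    intro x hx
    have hx0 : x ≠ 0 := ne_of_gt (lt_of_le_of_lt ht0.le hx)
    exact (continuousAt_const.add ((continuousAt_inv₀ hx0).pow 2)).continuousWithinAt
  · filter_upwards [ae_restrict_mem measurableSet_Ioi] with x hx
    have hx1 : 1 < x := lt_of_le_of_lt ht hx
    have hx0 : 0 < x := lt_trans one_pos hx1
    have hinv : x⁻¹^2 ≤ 1 := by
      rw [inv_pow]
      have h12 : (1:ℝ) ≤ x^2 := by nlinarith
      have := inv_anti₀ one_pos h12
      simpa using this
    have he : 0 < Real.exp (-x^2/2) := Real.exp_pos _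
    rw [Real.norm_eq_abs, Real.norm_eq_abs, abs_of_nonneg (by positivity),
      abs_of_nonneg (by positivity)]
    nlinarith

lemma gauss_tail_integral {t : ℝ} (ht : 1 ≤ t) :
    ∫ x in Ioi t, Real.exp (-x^2/2) * (1 + x⁻¹^2) = Real.exp (-t^2/2) / t := by
  have ht0 : 0 < t := lt_of_lt_of_le one_pos ht
  have hderiv : ∀ x ∈ Ioi t, HasDerivAt (fun y => -Real.exp (-y^2/2) / y)
      (Real.exp (-x^2/2) * (1 + x⁻¹^2)) x :=
    fun x hx => gauss_tail_deriv (lt_trans ht0 hx)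
  have hcont : ContinuousWithinAt (fun y => -Real.exp (-y^2/2) / y) (Ici t) t :=
    (gauss_tail_deriv ht0).continuousAt.continuousWithinAt
  have htend : Tendsto (fun y => -Real.exp (-y^2/2) / y) atTop (nhds 0) := by
    have h1 : Tendsto (fun y : ℝ => Real.exp (-y^2/2)) atTop (nhds 0) := by
      have h : Tendsto (fun y : ℝ => y^2/2) atTop atTop :=
        Tendsto.atTop_div_const (by norm_num) (tendsto_pow_atTop two_ne_zero)
      have hsq : Tendsto (fun y : ℝ => -y^2/2) atTop atBot := by
        refine (tendsto_neg_atTop_atBot.comp h).congr fun y => ?_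
        simp [Function.comp, neg_div]
      exact Real.tendsto_exp_atBot.comp hsq
    have h2 : Tendsto (fun y : ℝ => y⁻¹) atTop (nhds 0) := tendsto_inv_atTop_zero
    have := (h1.mul h2).neg
    simp only [zero_mul, neg_zero] at this
    convert this using 2 with y
    field_simp
  have := integral_Ioi_of_hasDerivAt_of_tendsto hcont hderiv (gauss_tail_integrable ht) htend
  rw [this]
  field_simp
  ring

lemma gauss_tail_lb_large {t : ℝ} (ht : 1 ≤ t) :
    t * Real.exp (-t^2/2) / (t^2+1) ≤ ∫ x in Ioi t, Real.exp (-x^2/2) := by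
  have ht0 : 0 < t := lt_of_lt_of_le one_pos ht
  have hc : (0:ℝ) < 1 + t⁻¹^2 := by positivity
  have key : ∫ x in Ioi t, Real.exp (-x^2/2) * (1 + x⁻¹^2) / (1 + t⁻¹^2)
      ≤ ∫ x in Ioi t, Real.exp (-x^2/2) := by
    apply setIntegral_mono_on ((gauss_tail_integrable ht).div_const _)
      (gauss_integrable.integrableOn) measurableSet_Ioi
    intro x hx
    have hxt : t < x := hx
    have hx0 : 0 < x := lt_trans ht0 hxt
    have he : 0 < Real.exp (-x^2/2) := Real.exp_pos _
    rw [div_le_iff₀ hc]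
    have hinv : x⁻¹^2 ≤ t⁻¹^2 := by
      rw [inv_pow, inv_pow]
      have := inv_anti₀ (by positivity : (0:ℝ) < t^2) (by nlinarith : t^2 ≤ x^2)
      exact this
    nlinarith
  rw [integral_div, gauss_tail_integral ht] at key
  refine le_trans (le_of_eq ?_) key
  field_simp

lemma sqrt_two_pi_lb : (25066/10000 : ℝ) ≤ Real.sqrt (2*π) := by
  rw [show (25066/10000 : ℝ) = Real.sqrt ((25066/10000)^2) by
    rw [Real.sqrt_sq (by norm_num)]]
  apply Real.sqrt_le_sqrt
  nlinarith [Real.pi_gt_d6]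

lemma sqrt_two_pi_ub : Real.sqrt (2*π) ≤ 25067/10000 := by
  rw [show (25067/10000 : ℝ) = Real.sqrt ((25067/10000)^2) by
    rw [Real.sqrt_sq (by norm_num)]]
  apply Real.sqrt_le_sqrt
  nlinarith [Real.pi_lt_d6]

lemma gauss_tail_lb {t : ℝ} (ht : 0 ≤ t) :
    Real.sqrt (2*π) / (26/10) * Real.exp (-t^2) ≤ ∫ x in Ioi t, Real.exp (-x^2/2) := by
  have hcl := sqrt_two_pi_lb
  have hcu := sqrt_two_pi_ub
  set c := Real.sqrt (2*π) with hc
  have hc0 : (0:ℝ) < c := lt_of_lt_of_le (by norm_num) hcl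
  rcases le_or_gt t (6/5) with h | h
  · -- small t
    rw [gauss_split ht]
    have hIoc := gauss_Ioc_le ht
    have hexp : Real.exp (-t^2) ≤ 1 - t^2 + t^4/2 - t^6/6 + t^8/24 := by
      have h4 := exp_neg_le_quart (sq_nonneg t)
      have e : 1 - t^2 + (t^2)^2/2 - (t^2)^3/6 + (t^2)^4/24
          = 1 - t^2 + t^4/2 - t^6/6 + t^8/24 := by ring
      rw [e] at h4
      exact h4
    set Pm : ℝ := 1 - t^2 + t^4/2 - t^6/6 + t^8/24 with hPm
    have hb : (0:ℝ) ≤ 6/5 - t := by linarith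
    have cert : t - t^3/6 + t^5/40 ≤ 25066/10000*(1/2 - Pm/(26/10)) := by
      rw [hPm]
      linarith [sq_nonneg ((t-4/5)*(t-1)), mul_nonneg (mul_nonneg ht ht) (pow_nonneg hb 5),
        mul_nonneg ht (pow_nonneg (sq_nonneg (t-9/10)) 2),
        mul_nonneg (pow_nonneg ht 5) hb, sq_nonneg ((t-7/10)*(t-1)), sq_nonneg (t*(t-1)),
        mul_nonneg (mul_nonneg (pow_nonneg ht 3) hb) (sq_nonneg (t-1/5)),
        mul_nonneg (pow_nonneg ht 7) hb, sq_nonneg (t*(t-6/5))]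
    have hG0 : 0 ≤ t - t^3/6 + t^5/40 := by
      nlinarith [pow_nonneg ht 5, mul_nonneg (mul_nonneg ht hb) (by linarith : (0:ℝ) ≤ 6/5 + t)]
    have hcoef : 0 ≤ 1/2 - Pm/(26/10) := by nlinarith
    have hmul : 0 ≤ (c - 25066/10000) * (1/2 - Pm/(26/10)) :=
      mul_nonneg (by linarith) hcoef
    have hml : c / (26/10) * Real.exp (-t^2) ≤ c / (26/10) * Pm :=
      mul_le_mul_of_nonneg_left hexp (by positivity)
    nlinarith [hml, hmul, cert, hIoc]
  · -- large t
    have ht1 : (1:ℝ) ≤ t := by linarith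
    have key := gauss_tail_lb_large ht1
    refine le_trans ?_ key
    have hQ : 1 + t^2/2 + t^4/8 + t^6/48 ≤ Real.exp (t^2/2) := by
      have h3 := exp_cube_le (by positivity : (0:ℝ) ≤ t^2/2)
      have e : 1 + t^2/2 + (t^2/2)^2/2 + (t^2/2)^3/6 = 1 + t^2/2 + t^4/8 + t^6/48 := by ring
      rw [e] at h3
      exact h3
    set Q : ℝ := 1 + t^2/2 + t^4/8 + t^6/48 with hQdef
    have hQ0 : (0:ℝ) < Q := by rw [hQdef]; positivity
    have hE : Real.exp (-t^2/2) ≤ 1/Q := by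
      rw [show -t^2/2 = -(t^2/2) by ring, Real.exp_neg, inv_eq_one_div]
      exact one_div_le_one_div_of_le hQ0 hQ
    have hE0 : (0:ℝ) < Real.exp (-t^2/2) := Real.exp_pos _
    have cert : 25067/10000/(26/10)*(t^2+1) ≤ t*Q := by
      rw [hQdef]
      have hs : (0:ℝ) ≤ t - 6/5 := by linarith
      linarith [pow_nonneg hs 2, pow_nonneg hs 3, pow_nonneg hs 4, pow_nonneg hs 5,
        pow_nonneg hs 6, pow_nonneg hs 7]
    have ht21 : (0:ℝ) < t^2 + 1 := by positivity
    have hstep : c/(26/10) * (1/Q) ≤ t/(t^2+1) := by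
      rw [mul_one_div, div_div, div_le_div_iff₀ (by positivity : (0:ℝ) < 26/10*Q) ht21]
      nlinarith [mul_nonneg (sub_nonneg.2 hcu) ht21.le, cert, hQ0.le]
    have hsplit : Real.exp (-t^2) = Real.exp (-t^2/2) * Real.exp (-t^2/2) := by
      rw [← Real.exp_add]; ring_nf
    rw [hsplit]
    calc c/(26/10) * (Real.exp (-t^2/2) * Real.exp (-t^2/2))
        ≤ c/(26/10) * ((1/Q) * Real.exp (-t^2/2)) := by
          apply mul_le_mul_of_nonneg_left _ (by positivity)
          exact mul_le_mul_of_nonneg_right hE hE0.le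
      _ = (c/(26/10) * (1/Q)) * Real.exp (-t^2/2) := by ring
      _ ≤ (t/(t^2+1)) * Real.exp (-t^2/2) := mul_le_mul_of_nonneg_right hstep hE0.le
      _ = t * Real.exp (-t^2/2) / (t^2+1) := by ring

lemma pdf01 (x : ℝ) : gaussianPDFReal 0 1 x = (Real.sqrt (2*π))⁻¹ * Real.exp (-x^2/2) := by
  simp [gaussianPDFReal]

/-- **Anti-concentration for independent Gaussian variables.** Let `N_1, …, N_m` be `m`
independent standard normal variables and `u > 0`. If `m ≥ 2.6 u`, then with probability at
least `1 - e^{-u}`, `max_{i ≤ m} N_i ≥ √(log(m / (2.6 u)))`. -/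
theorem statement7 {Ω : Type*} [MeasurableSpace Ω] (P : Measure Ω) [IsProbabilityMeasure P]
    (m : ℕ) (N : Fin m → Ω → ℝ)
    (hindep : iIndepFun N P)
    (hlaw : ∀ i, Measure.map (N i) P = gaussianReal 0 1)
    (u : ℝ) (hu : 0 < u) (hm : 2.6 * u ≤ (m : ℝ)) :
    P {ω | Real.sqrt (Real.log ((m : ℝ) / (2.6 * u))) ≤ ⨆ i, N i ω}
      ≥ ENNReal.ofReal (1 - Real.exp (-u)) := by
  have hu26 : (0:ℝ) < 2.6 * u := by norm_num; linarith
  have hm0 : (0:ℝ) < m := lt_of_lt_of_le hu26 hm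
  have hmnat : 0 < m := by exact_mod_cast hm0
  set s : ℝ := (m:ℝ) / (2.6 * u) with hsdef
  have hs0 : 0 < s := div_pos hm0 hu26
  have hs1 : 1 ≤ s := (one_le_div hu26).2 hm
  set t : ℝ := Real.sqrt (Real.log s) with htdef
  have hlog : 0 ≤ Real.log s := Real.log_nonneg hs1
  have ht0 : 0 ≤ t := Real.sqrt_nonneg _
  have ht2 : t^2 = Real.log s := Real.sq_sqrt hlog
  have hexps : Real.exp (-t^2) = 1/s := by
    rw [ht2, Real.exp_neg, Real.exp_log hs0, one_div]
  have hum : u / m = Real.exp (-t^2) / 2.6 := by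
    rw [hexps, hsdef]
    field_simp
  -- measurability
  have hmeas : ∀ i, AEMeasurable (N i) P := by
    intro i
    by_contra h
    have h0 := hlaw i
    rw [Measure.map_of_not_aemeasurable h] at h0
    have : (0 : ℝ≥0∞) = 1 := by
      calc (0 : ℝ≥0∞) = (0 : Measure ℝ) Set.univ := rfl
        _ = gaussianReal 0 1 Set.univ := by rw [h0]
        _ = 1 := measure_univ
    simp at this
  -- tail integral lower bound
  have hsqrt0 : (0:ℝ) < Real.sqrt (2*π) := Real.sqrt_pos.2 (by positivity)
  have htail : u / m ≤ ∫ x in Ici t, gaussianPDFReal 0 1 x := by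
    rw [integral_Ici_eq_integral_Ioi]
    have e : ∫ x in Ioi t, gaussianPDFReal 0 1 x
        = (Real.sqrt (2*π))⁻¹ * ∫ x in Ioi t, Real.exp (-x^2/2) := by
      simp_rw [pdf01]
      exact integral_const_mul _ _
    rw [e, hum]
    have hlb := gauss_tail_lb ht0
    calc Real.exp (-t^2) / 2.6
        = (Real.sqrt (2*π))⁻¹ * (Real.sqrt (2*π) / (26/10) * Real.exp (-t^2)) := by
          field_simp
          ring
      _ ≤ (Real.sqrt (2*π))⁻¹ * ∫ x in Ioi t, Real.exp (-x^2/2) :=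
          mul_le_mul_of_nonneg_left hlb (by positivity)
  -- CDF upper bound
  have hIio : gaussianReal 0 1 (Iio t) ≤ ENNReal.ofReal (1 - u/m) := by
    rw [gaussianReal_apply_eq_integral 0 one_ne_zero (Iio t)]
    apply ENNReal.ofReal_le_ofReal
    have htot : (∫ x in Iio t, gaussianPDFReal 0 1 x) + ∫ x in Ici t, gaussianPDFReal 0 1 x
        = 1 := by
      have := integral_add_compl (measurableSet_Iio (a := t)) (integrable_gaussianPDFReal 0 1)
      rw [compl_Iio] at this
      rw [this]
      exact integral_gaussianPDFReal_eq_one 0 one_ne_zero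
    linarith
  -- per-variable bound
  have hpre : ∀ i, P ((N i) ⁻¹' (Iio t)) ≤ ENNReal.ofReal (1 - u/m) := by
    intro i
    rw [← Measure.map_apply_of_aemeasurable (hmeas i) measurableSet_Iio, hlaw i]
    exact hIio
  -- independence
  have hB : P (⋂ i, (N i) ⁻¹' (Iio t)) = ∏ i, P ((N i) ⁻¹' (Iio t)) :=
    hindep.meas_iInter (fun i => ⟨Iio t, measurableSet_Iio, rfl⟩)
  have hum1 : u / m ≤ 1 := by
    rw [div_le_one hm0]
    nlinarith
  have hum0 : 0 ≤ 1 - u/m := by linarith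
  have hBle : P (⋂ i, (N i) ⁻¹' (Iio t)) ≤ ENNReal.ofReal (Real.exp (-u)) := by
    rw [hB]
    calc ∏ i, P ((N i) ⁻¹' (Iio t)) ≤ ∏ _i : Fin m, ENNReal.ofReal (1 - u/m) :=
        Finset.prod_le_prod' (fun i _ => hpre i)
      _ = ENNReal.ofReal (1 - u/m) ^ m := by
          rw [Finset.prod_const, Finset.card_univ, Fintype.card_fin]
      _ = ENNReal.ofReal ((1 - u/m) ^ m) := (ENNReal.ofReal_pow hum0 m).symm
      _ ≤ ENNReal.ofReal (Real.exp (-u)) := by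
          apply ENNReal.ofReal_le_ofReal
          have h1 : 1 - u/m ≤ Real.exp (-(u/m)) := by
            have := Real.add_one_le_exp (-(u/m))
            linarith
          calc (1 - u/m) ^ m ≤ Real.exp (-(u/m)) ^ m := pow_le_pow_left₀ hum0 h1 m
            _ = Real.exp (m * -(u/m)) := by rw [← Real.exp_nat_mul]
            _ = Real.exp (-u) := by
                congr 1
                field_simp
  -- union bound
  have hcov : (1:ℝ≥0∞) ≤ P {ω | t ≤ ⨆ i, N i ω} + P (⋂ i, (N i) ⁻¹' (Iio t)) := by
    have hsub : (Set.univ : Set Ω) ⊆ {ω | t ≤ ⨆ i, N i ω} ∪ ⋂ i, (N i) ⁻¹' (Iio t) := by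
      intro ω _
      by_cases h : t ≤ ⨆ i, N i ω
      · exact Or.inl h
      · right
        push_neg at h
        refine Set.mem_iInter.2 fun i => ?_
        have hle : N i ω ≤ ⨆ j, N j ω :=
          le_ciSup (Set.Finite.bddAbove (Set.finite_range fun j => N j ω)) i
        exact lt_of_le_of_lt hle h
    calc (1:ℝ≥0∞) = P Set.univ := measure_univ.symm
      _ ≤ P ({ω | t ≤ ⨆ i, N i ω} ∪ ⋂ i, (N i) ⁻¹' (Iio t)) := measure_mono hsub
      _ ≤ _ := measure_union_le _ _
  -- conclude
  have hexp1 : Real.exp (-u) ≤ 1 := Real.exp_le_one_iff.2 (by linarith)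
  have hkey : ENNReal.ofReal (1 - Real.exp (-u)) + ENNReal.ofReal (Real.exp (-u))
      ≤ P {ω | t ≤ ⨆ i, N i ω} + ENNReal.ofReal (Real.exp (-u)) := by
    rw [← ENNReal.ofReal_add (by linarith) (Real.exp_pos _).le]
    have : (1:ℝ) - Real.exp (-u) + Real.exp (-u) = 1 := by ring
    rw [this, ENNReal.ofReal_one]
    calc (1:ℝ≥0∞) ≤ P {ω | t ≤ ⨆ i, N i ω} + P (⋂ i, (N i) ⁻¹' (Iio t)) := hcov
      _ ≤ P {ω | t ≤ ⨆ i, N i ω} + ENNReal.ofReal (Real.exp (-u)) := by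
          exact add_le_add_right hBle _
  exact ENNReal.le_of_add_le_add_right ENNReal.ofReal_ne_top hkey
end

section
/- Let (X,d) be a pseudo-metric space, ε > 0, m = N(X,d,ε) < ∞, and let T ⊆ X be an ε-net of X of cardinality m. Let μ be a Borel probability measure on X such that μ(B(t,ε)) ≥ 1/m for every t ∈ T, where B(t,ε) = {x : d(x,t) ≤ ε}. Let u > 0 and let x_1, …, x_n be independent random points each distributed according to μ, with n ≥ m(log m + u). Then with probability at least 1 − e^{−u}, the set {x_1, …, x_n} is a 2ε-net of X, i.e. every x ∈ X satisfies d(x, x_i) ≤ 2ε for some i ≤ n. -/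
open MeasureTheory ProbabilityTheory Real Metric

/-- **Covering with uniform sampling.** Let `(X,d)` be a pseudo-metric space, `ε > 0`, and
`T` an `ε`-net of `X` of minimal cardinality `m = N(X,d,ε)`. Let `μ` be a Borel probability
measure on `X` with `μ(B(t,ε)) ≥ 1/m` for every `t ∈ T`. If `x_1, …, x_n` are independent
points of law `μ` with `n ≥ m(log m + u)` for some `u > 0`, then with probability at least
`1 - e^{-u}`, `{x_1, …, x_n}` is a `2ε`-net of `X`. -/
theorem statement10 {X : Type*} [PseudoMetricSpace X] [Nonempty X]
    [MeasurableSpace X] [BorelSpace X]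
    (ε : ℝ) (hε : 0 < ε) (m : ℕ) (T : Finset X)
    (hTcard : T.card = m)
    (hTnet : ∀ x : X, ∃ t ∈ T, dist x t ≤ ε)
    (hTmin : ∀ T' : Finset X, (∀ x : X, ∃ t ∈ T', dist x t ≤ ε) → m ≤ T'.card)
    (μ : Measure X) [IsProbabilityMeasure μ]
    (hμ : ∀ t ∈ T, ENNReal.ofReal (1 / (m : ℝ)) ≤ μ (closedBall t ε))
    {Ω : Type*} [MeasurableSpace Ω] (P : Measure Ω) [IsProbabilityMeasure P]
    (u : ℝ) (hu : 0 < u) (n : ℕ) (hn : (m : ℝ) * (Real.log m + u) ≤ (n : ℝ))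
    (x : Fin n → Ω → X)
    (hindep : iIndepFun x P)
    (hlaw : ∀ i, Measure.map (x i) P = μ) :
    P {ω | ∀ y : X, ∃ i : Fin n, dist y (x i ω) ≤ 2 * ε}
      ≥ ENNReal.ofReal (1 - Real.exp (-u)) := by
  classical
  -- basic facts about m
  have hT0 : T.Nonempty := by
    obtain ⟨t, ht, _⟩ := hTnet (Classical.arbitrary X)
    exact ⟨t, ht⟩
  have hm1 : 1 ≤ m := by rw [← hTcard]; exact Finset.card_pos.mpr hT0
  have hm0 : (0:ℝ) < m := by exact_mod_cast hm1
  have h1m : (1:ℝ)/m ≤ 1 := by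
    rw [div_le_one hm0]; exact_mod_cast hm1
  have h1m0 : (0:ℝ) ≤ 1 - 1/m := by linarith
  -- the x i are aemeasurable
  have haem : ∀ i, AEMeasurable (x i) P := by
    intro i
    by_contra h
    have h0 := hlaw i
    rw [Measure.map_of_not_aemeasurable h] at h0
    have : (0 : Measure X) Set.univ = μ Set.univ := by rw [h0]
    simp [measure_univ] at this
  -- the bad events
  set F : X → Set Ω := fun t => ⋂ i, x i ⁻¹' (closedBall t ε)ᶜ with hF
  -- bound on each bad event
  have hFt : ∀ t ∈ T, P (F t) ≤ ENNReal.ofReal ((1 - 1/(m:ℝ))^n) := by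
    intro t ht
    have hmeas : ∀ i : Fin n,
        MeasurableSet[MeasurableSpace.comap (x i) inferInstance]
          (x i ⁻¹' (closedBall t ε)ᶜ) :=
      fun i => ⟨(closedBall t ε)ᶜ, measurableSet_closedBall.compl, rfl⟩
    have hprod := hindep.meas_iInter hmeas
    have hfac : ∀ i : Fin n,
        P (x i ⁻¹' (closedBall t ε)ᶜ) ≤ ENNReal.ofReal (1 - 1/(m:ℝ)) := by
      intro i
      have heq : P (x i ⁻¹' (closedBall t ε)ᶜ) = μ (closedBall t ε)ᶜ := by
        rw [← hlaw i,
          Measure.map_apply_of_aemeasurable (haem i) measurableSet_closedBall.compl]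
      rw [heq, measure_compl measurableSet_closedBall (measure_ne_top μ _), measure_univ]
      have h2 : ENNReal.ofReal (1 - 1/(m:ℝ))
          = 1 - ENNReal.ofReal (1/(m:ℝ)) := by
        rw [ENNReal.ofReal_sub 1 (by positivity), ENNReal.ofReal_one]
      rw [h2]
      exact tsub_le_tsub le_rfl (hμ t ht)
    calc P (F t) = ∏ i : Fin n, P (x i ⁻¹' (closedBall t ε)ᶜ) := hprod
      _ ≤ ∏ _i : Fin n, ENNReal.ofReal (1 - 1/(m:ℝ)) :=
          Finset.prod_le_prod' fun i _ => hfac i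
      _ = ENNReal.ofReal ((1 - 1/(m:ℝ))^n) := by
          rw [Finset.prod_const, Finset.card_univ, Fintype.card_fin,
            ENNReal.ofReal_pow h1m0]
  -- union bound and the real-number estimate
  have hreal : (m:ℝ) * (1 - 1/(m:ℝ))^n ≤ Real.exp (-u) := by
    have h1 : (1 - 1/(m:ℝ))^n ≤ Real.exp (-(1/(m:ℝ)))^n := by
      apply pow_le_pow_left₀ h1m0
      linarith [Real.add_one_le_exp (-(1/(m:ℝ)))]
    have h2 : Real.exp (-(1/(m:ℝ)))^n = Real.exp (-(n/(m:ℝ))) := by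
      rw [← Real.exp_nat_mul]; ring_nf
    have h3 : Real.log m + u ≤ (n:ℝ)/m := by
      rw [le_div_iff₀ hm0]; linarith [hn]
    have h4 : Real.exp (-((n:ℝ)/m)) ≤ Real.exp (-(Real.log m + u)) :=
      Real.exp_le_exp.mpr (by linarith)
    have h5 : Real.exp (-(Real.log m + u)) = (1/(m:ℝ)) * Real.exp (-u) := by
      rw [neg_add, Real.exp_add, Real.exp_neg, Real.exp_log hm0]
      ring
    calc (m:ℝ) * (1 - 1/(m:ℝ))^n ≤ (m:ℝ) * ((1/(m:ℝ)) * Real.exp (-u)) := by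
          apply mul_le_mul_of_nonneg_left _ hm0.le
          rw [← h5]; rw [h2] at h1; linarith
      _ = Real.exp (-u) := by field_simp
  have hunion : P (⋃ t ∈ T, F t) ≤ ENNReal.ofReal (Real.exp (-u)) := by
    calc P (⋃ t ∈ T, F t) ≤ ∑ t ∈ T, P (F t) := measure_biUnion_finset_le T F
      _ ≤ ∑ _t ∈ T, ENNReal.ofReal ((1 - 1/(m:ℝ))^n) :=
          Finset.sum_le_sum hFt
      _ = (m : ℕ) * ENNReal.ofReal ((1 - 1/(m:ℝ))^n) := by
          rw [Finset.sum_const, hTcard, nsmul_eq_mul]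
      _ = ENNReal.ofReal ((m:ℝ) * (1 - 1/(m:ℝ))^n) := by
          rw [ENNReal.ofReal_mul (by positivity), ENNReal.ofReal_natCast]
      _ ≤ ENNReal.ofReal (Real.exp (-u)) := ENNReal.ofReal_le_ofReal hreal
  -- the good event contains the complement of the union
  have hsub : (⋃ t ∈ T, F t)ᶜ ⊆ {ω | ∀ y : X, ∃ i : Fin n, dist y (x i ω) ≤ 2 * ε} := by
    intro ω hω y
    simp only [Set.mem_compl_iff, Set.mem_iUnion, not_exists] at hω
    obtain ⟨t, ht, hyt⟩ := hTnet y
    have := hω t ht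
    rw [hF] at this
    simp only [Set.mem_iInter, Set.mem_preimage, Set.mem_compl_iff, not_forall, not_not] at this
    obtain ⟨i, hi⟩ := this
    refine ⟨i, ?_⟩
    have hdist : dist (x i ω) t ≤ ε := mem_closedBall.mp hi
    calc dist y (x i ω) ≤ dist y t + dist t (x i ω) := dist_triangle _ _ _
      _ ≤ ε + ε := add_le_add hyt (by rwa [dist_comm])
      _ = 2 * ε := by ring
  -- conclude
  calc ENNReal.ofReal (1 - Real.exp (-u))
      = 1 - ENNReal.ofReal (Real.exp (-u)) := by
        rw [ENNReal.ofReal_sub 1 (Real.exp_nonneg _), ENNReal.ofReal_one]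
    _ ≤ 1 - P (⋃ t ∈ T, F t) := tsub_le_tsub le_rfl hunion
    _ ≤ P (⋃ t ∈ T, F t)ᶜ := by
        rw [tsub_le_iff_right]
        calc (1 : ENNReal) = P Set.univ := (measure_univ).symm
          _ = P ((⋃ t ∈ T, F t) ∪ (⋃ t ∈ T, F t)ᶜ) := by rw [Set.union_compl_self]
          _ ≤ P (⋃ t ∈ T, F t) + P (⋃ t ∈ T, F t)ᶜ := measure_union_le _ _
          _ = P (⋃ t ∈ T, F t)ᶜ + P (⋃ t ∈ T, F t) := by ring
    _ ≤ P {ω | ∀ y : X, ∃ i : Fin n, dist y (x i ω) ≤ 2 * ε} := measure_mono hsub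
end
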